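/- arXiv:2002.10334 — 9 statements merged into one kernel-verified Lean document; each statement's English description precedes it below -/
import Mathlib

section
/- In a bicategory, if an identity 1-cell id_Y is subterminal in the hom-category (i.e. for any 1-cell c : Y → Y there is at most one 2-cell c ⟹ id_Y), then for any two left adjoint 1-cells f₁, f₂ : X → Y there is at most one 2-cell f₁ ⟹ f₂. -/
open CategoryTheory CategoryTheory.Bicategory

universe w v u

private lemma recover_aux {B : Type u} [Bicategory.{w, v} B] {X Y : B}
    {f₁ f₂ : X ⟶ Y} {g₂ : Y ⟶ X} (adj : f₂ ⊣ g₂) (α : f₁ ⟶ f₂) :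
    α = (λ_ f₁).inv ≫ adj.unit ▷ f₁ ≫ (α_ f₂ g₂ f₁).hom ≫
        f₂ ◁ ((g₂ ◁ α) ≫ adj.counit) ≫ (ρ_ f₂).hom := by
  calc
    α = (λ_ f₁).inv ≫ 𝟙 X ◁ α ≫ (λ_ f₂).hom := by simp
    _ = (λ_ f₁).inv ≫ 𝟙 X ◁ α ≫ leftZigzag adj.unit adj.counit ≫ (ρ_ f₂).hom := by
        rw [adj.left_triangle]; simp
    _ = (λ_ f₁).inv ≫ (𝟙 X ◁ α ≫ adj.unit ▷ f₂) ⊗≫ f₂ ◁ adj.counit ≫ (ρ_ f₂).hom := by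
        dsimp only [leftZigzag]; bicategory
    _ = (λ_ f₁).inv ≫ (adj.unit ▷ f₁ ≫ (f₂ ≫ g₂) ◁ α) ⊗≫ f₂ ◁ adj.counit ≫ (ρ_ f₂).hom := by
        rw [whisker_exchange]
    _ = _ := by bicategory

/-- If every identity 1-cell is subterminal in its hom-category (for any `c : Y ⟶ Y` there
is at most one 2-cell `c ⟶ 𝟙 Y`), then for any two left adjoint 1-cells `f₁ f₂ : X ⟶ Y`
there is at most one 2-cell `f₁ ⟶ f₂`. -/
theorem leftAdjoint_cells_subsingleton {B : Type u} [Bicategory.{w, v} B]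
    (hsub : ∀ (Y : B) (c : Y ⟶ Y), Subsingleton (c ⟶ 𝟙 Y))
    {X Y : B} (f₁ f₂ : X ⟶ Y)
    (h₁ : ∃ g₁ : Y ⟶ X, Nonempty (f₁ ⊣ g₁)) (h₂ : ∃ g₂ : Y ⟶ X, Nonempty (f₂ ⊣ g₂)) :
    Subsingleton (f₁ ⟶ f₂) := by
  obtain ⟨g₂, ⟨adj⟩⟩ := h₂
  constructor
  intro α β
  rw [recover_aux adj α, recover_aux adj β,
    Subsingleton.elim ((g₂ ◁ α) ≫ adj.counit) ((g₂ ◁ β) ≫ adj.counit)]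
end

section
/- In a bicategory where every identity 1-cell is subterminal in its hom-category, every right adjoint 1-cell is subterminal: for any 1-cell c : X → Y and right adjoint g : X → Y, there is at most one 2-cell c ⟹ g. -/
open CategoryTheory CategoryTheory.Bicategory

universe w v u

/-- If every identity 1-cell is subterminal in its hom-category, then every right adjoint
1-cell is subterminal: for any 1-cell `c : X ⟶ Y` and right adjoint `g : X ⟶ Y` there is
at most one 2-cell `c ⟶ g`. -/
theorem rightAdjoint_subterminal {B : Type u} [Bicategory.{w, v} B]
    (hsub : ∀ (Z : B) (c : Z ⟶ Z), Subsingleton (c ⟶ 𝟙 Z))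
    {X Y : B} (g : X ⟶ Y) (hg : ∃ f : Y ⟶ X, Nonempty (f ⊣ g)) (c : X ⟶ Y) :
    Subsingleton (c ⟶ g) := by
  obtain ⟨f, ⟨adj⟩⟩ := hg
  have tri : g ◁ adj.unit ≫ (α_ g f g).inv ≫ adj.counit ▷ g = (ρ_ g).hom ≫ (λ_ g).inv := by
    have h := adj.right_triangle
    simp only [bicategoricalComp] at h
    simpa using h
  have key : ∀ α : c ⟶ g,
      α = (ρ_ c).inv ≫ c ◁ adj.unit ≫ (α_ c f g).inv ≫
        ((α ▷ f ≫ adj.counit) ▷ g) ≫ (λ_ g).hom := by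
    intro α
    rw [comp_whiskerRight]
    calc α = (ρ_ c).inv ≫ α ▷ 𝟙 Y ≫ (ρ_ g).hom ≫ (λ_ g).inv ≫ (λ_ g).hom := by simp
    _ = (ρ_ c).inv ≫ α ▷ 𝟙 Y ≫ (g ◁ adj.unit ≫ (α_ g f g).inv ≫ adj.counit ▷ g) ≫ (λ_ g).hom := by
        rw [tri]; simp
    _ = (ρ_ c).inv ≫ (c ◁ adj.unit ≫ α ▷ (f ≫ g)) ≫ (α_ g f g).inv ≫ adj.counit ▷ g ≫ (λ_ g).hom := by
        rw [whisker_exchange]; simp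
    _ = _ := by
        rw [Category.assoc, associator_inv_naturality_left_assoc]; simp
  constructor
  intro α β
  rw [key α, key β, @Subsingleton.elim _ (hsub X (c ≫ f)) (α ▷ f ≫ adj.counit) (β ▷ f ≫ adj.counit)]
end

section
/- Suppose C is a bicategory in which every 2-cell of the form c ⟹ b ∘ a factors through a generic 2-cell, and suppose a left unitor λ⁻¹ : c ⟹ c ∘ id factors through a generic 2-cell δ : c ⟹ r ∘ l via comparison 2-cells α : l ⟹ id and β : r ⟹ c. Then β is invertible. -/
open CategoryTheory CategoryTheory.Bicategory

universe w v u

namespace GenericBicat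

variable {B : Type u} [Bicategory.{w, v} B]

/-- An object of the category of elements of `C(c, - ∘ -)` (through the object `Y`):
a factorization of the 1-cell `c` as a composite through `Y`, together with a 2-cell. -/
structure Fac {X Z : B} (c : X ⟶ Z) (Y : B) where
  fst : X ⟶ Y
  snd : Y ⟶ Z
  cell : c ⟶ fst ≫ snd

/-- Morphisms in the category of elements of `C(c, - ∘ -)`: a pair of 2-cells
pasting one factorization to the other. -/
def FacHom {X Z : B} {c : X ⟶ Z} {Y : B} (F G : Fac c Y) : Prop :=
  ∃ (u : F.fst ⟶ G.fst) (v : F.snd ⟶ G.snd),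
    G.cell = F.cell ≫ (u ▷ F.snd) ≫ (G.fst ◁ v)

/-- Two factorizations are connected if they lie in the same connected component of
the category of elements. -/
def Connected {X Z : B} {c : X ⟶ Z} {Y : B} (F G : Fac c Y) : Prop :=
  Relation.EqvGen FacHom F G

/-- A 2-cell `δ : c ⟶ F.fst ≫ F.snd` is generic if it is initial in its connected
component of the category of elements of `C(c, - ∘ -)`. -/
def IsGeneric {X Z : B} {c : X ⟶ Z} {Y : B} (F : Fac c Y) : Prop :=
  ∀ G : Fac c Y, Connected F G →
    ∃! p : (F.fst ⟶ G.fst) × (F.snd ⟶ G.snd),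
      G.cell = F.cell ≫ (p.1 ▷ F.snd) ≫ (G.fst ◁ p.2)

/-- A bicategory is generic if each presheaf `C(c, - ∘ -)` is a coproduct of representables;
equivalently, every 2-cell `c ⟶ a ≫ b` factors through a generic 2-cell. -/
def IsGenericBicategory (B : Type u) [Bicategory.{w, v} B] : Prop :=
  ∀ {X Z : B} (c : X ⟶ Z) (Y : B) (G : Fac c Y), ∃ F : Fac c Y, IsGeneric F ∧ FacHom F G

/-- The pasting of a 2-cell `δ : c ⟶ l ≫ r` with a 2-cell `η : 𝟙 Y ⟶ h ≫ k` out of the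
identity and comparison 2-cells `α : l ≫ h ⟶ a` and `β : k ≫ r ⟶ b`. -/
def pasteFac {X Y Y' Z : B} {l : X ⟶ Y} {r : Y ⟶ Z} {c : X ⟶ Z} (δ : c ⟶ l ≫ r)
    {h : Y ⟶ Y'} {k : Y' ⟶ Y} (η : 𝟙 Y ⟶ h ≫ k) {a : X ⟶ Y'} {b : Y' ⟶ Z}
    (α : l ≫ h ⟶ a) (β : k ≫ r ⟶ b) : c ⟶ a ≫ b :=
  δ ≫ (l ◁ ((λ_ r).inv ≫ (η ▷ r) ≫ (α_ h k r).hom)) ≫ (α_ l h (k ≫ r)).inv ≫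
    (α ▷ (k ≫ r)) ≫ (a ◁ β)

/-- `δ : c ⟶ l ≫ r` is an *initial generic* 2-cell: it is an invertible generic 2-cell,
every 2-cell `γ : c ⟶ a ≫ b` factors as `δ` pasted with a generic `η : 𝟙 Y ⟶ h ≫ k` out of
the identity and comparison 2-cells, and such factorizations are unique up to coherent
isomorphism. -/
def IsInitialGeneric {X Y Z : B} {c : X ⟶ Z} (l : X ⟶ Y) (r : Y ⟶ Z) (δ : c ⟶ l ≫ r) : Prop :=
  IsGeneric (⟨l, r, δ⟩ : Fac c Y) ∧ IsIso δ ∧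
  ∀ {Y' : B} (a : X ⟶ Y') (b : Y' ⟶ Z) (γ : c ⟶ a ≫ b),
    (∃ (h : Y ⟶ Y') (k : Y' ⟶ Y) (η : 𝟙 Y ⟶ h ≫ k) (α : l ≫ h ⟶ a) (β : k ≫ r ⟶ b),
      IsGeneric (⟨h, k, η⟩ : Fac (𝟙 Y) Y') ∧ γ = pasteFac δ η α β) ∧
    (∀ (h : Y ⟶ Y') (k : Y' ⟶ Y) (η : 𝟙 Y ⟶ h ≫ k) (α : l ≫ h ⟶ a) (β : k ≫ r ⟶ b),
      IsGeneric (⟨h, k, η⟩ : Fac (𝟙 Y) Y') → γ = pasteFac δ η α β →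
      ∀ (h' : Y ⟶ Y') (k' : Y' ⟶ Y) (η' : 𝟙 Y ⟶ h' ≫ k') (α' : l ≫ h' ⟶ a) (β' : k' ≫ r ⟶ b),
        IsGeneric (⟨h', k', η'⟩ : Fac (𝟙 Y) Y') → γ = pasteFac δ η' α' β' →
        ∃ (φ : h ≅ h') (ψ : k ≅ k'),
          η' = η ≫ (φ.hom ▷ k) ≫ (h' ◁ ψ.hom) ∧
          α = (l ◁ φ.hom) ≫ α' ∧ β = (ψ.hom ▷ r) ≫ β')

/-- Axiom 1: every 1-cell has an initial generic 2-cell. -/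
def Axiom1 (B : Type u) [Bicategory.{w, v} B] : Prop :=
  ∀ {X Z : B} (c : X ⟶ Z), ∃ (Y : B) (l : X ⟶ Y) (r : Y ⟶ Z) (δ : c ⟶ l ≫ r),
    IsInitialGeneric l r δ

/-- Axiom 2: initial factorizations yield initial generics: in any factorization through an
initial generic `δ : c ⟶ l ≫ r` via a generic `η : 𝟙 Y ⟶ h ≫ k` out of the identity, the
identity 2-cells on `l ≫ h` and on `k ≫ r` are initial generics. -/
def Axiom2 (B : Type u) [Bicategory.{w, v} B] : Prop :=
  ∀ {X Y Y' Z : B} (l : X ⟶ Y) (r : Y ⟶ Z) (c : X ⟶ Z) (δ : c ⟶ l ≫ r),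
    IsInitialGeneric l r δ →
    ∀ (h : Y ⟶ Y') (k : Y' ⟶ Y) (η : 𝟙 Y ⟶ h ≫ k), IsGeneric (⟨h, k, η⟩ : Fac (𝟙 Y) Y') →
      IsInitialGeneric l h (𝟙 (l ≫ h)) ∧ IsInitialGeneric k r (𝟙 (k ≫ r))

end GenericBicat

open GenericBicat

/-- If in a bicategory where every 2-cell into a composite factors through a generic 2-cell,
an inverse left unitor `c ⟶ 𝟙 X ≫ c` factors through a generic `δ : c ⟶ l ≫ r` via
comparison 2-cells `α : l ⟶ 𝟙 X` and `β : r ⟶ c`, then `β` is invertible. -/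
theorem unitor_factor_comparison_isIso {B : Type u} [Bicategory.{w, v} B]
    (hB : IsGenericBicategory B) {X Z : B} (c : X ⟶ Z) (l : X ⟶ X) (r : X ⟶ Z)
    (δ : c ⟶ l ≫ r) (hgen : IsGeneric (⟨l, r, δ⟩ : Fac c X))
    (α : l ⟶ 𝟙 X) (β : r ⟶ c)
    (hfac : (λ_ c).inv = δ ≫ (α ▷ r) ≫ (𝟙 X ◁ β)) :
    IsIso β := by
  set v₀ : c ⟶ r := δ ≫ (α ▷ r) ≫ (λ_ r).hom with hv
  have hnat : (λ_ r).hom ≫ β = (𝟙 X ◁ β) ≫ (λ_ c).hom := by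
    simp [Bicategory.leftUnitor_naturality]
  have hfac' : (δ ≫ α ▷ r) ≫ 𝟙 X ◁ β = (λ_ c).inv := by rw [hfac, Category.assoc]
  have hvβ : v₀ ≫ β = 𝟙 c := by
    rw [hv]
    simp only [Category.assoc]
    rw [hnat, ← Category.assoc, ← Category.assoc, hfac']
    simp
  have hβv : β ≫ v₀ = 𝟙 r := by
    have hconn : Connected (⟨l, r, δ⟩ : Fac c X) ⟨𝟙 X, r, δ ≫ (α ▷ r)⟩ :=
      Relation.EqvGen.rel _ _ ⟨α, 𝟙 r, by simp⟩
    obtain ⟨p, hp, hup⟩ := hgen ⟨𝟙 X, r, δ ≫ (α ▷ r)⟩ hconn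
    have h1 : (δ ≫ (α ▷ r) : c ⟶ 𝟙 X ≫ r) =
        δ ≫ (((α, 𝟙 r) : (l ⟶ 𝟙 X) × (r ⟶ r)).1 ▷ r) ≫ (𝟙 X ◁ ((α, 𝟙 r)).2) := by simp
    have h2 : (δ ≫ (α ▷ r) : c ⟶ 𝟙 X ≫ r) =
        δ ≫ (((α, β ≫ v₀) : (l ⟶ 𝟙 X) × (r ⟶ r)).1 ▷ r) ≫ (𝟙 X ◁ ((α, β ≫ v₀)).2) := by
      have : (𝟙 X ◁ v₀) = (λ_ c).hom ≫ v₀ ≫ (λ_ r).inv := by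
        rw [← Bicategory.leftUnitor_naturality]; simp
      simp only [Bicategory.whiskerLeft_comp, this, hv]
      simp only [← Category.assoc]
      rw [hfac']
      simp [Category.assoc]
    have := (hup _ h2).trans (hup _ h1).symm
    exact congrArg Prod.snd this
  exact ⟨v₀, hβv, hvβ⟩
end

section
/- In a generic bicategory, for every object X the 2-cell λ⁻¹ : id_X ⟹ id_X ∘ id_X (inverse unitor) is itself a generic 2-cell, and moreover it is an initial generic: every 2-cell id_X ⟹ b ∘ a through any object factors through it as in Axiom 1. -/
open CategoryTheory CategoryTheory.Bicategory

universe w v u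

open GenericBicat

namespace GenericBicat
variable {B : Type u} [Bicategory.{w, v} B]

lemma pasteFac_lambda {X Y' : B} {h : X ⟶ Y'} {k : Y' ⟶ X} (η : 𝟙 X ⟶ h ≫ k)
    {a : X ⟶ Y'} {b : Y' ⟶ X} (α : 𝟙 X ≫ h ⟶ a) (β : k ≫ 𝟙 X ⟶ b) :
    pasteFac (λ_ (𝟙 X)).inv η α β
      = η ≫ (((λ_ h).inv ≫ α) ▷ k) ≫ (a ◁ ((ρ_ k).inv ≫ β)) := by
  unfold pasteFac
  bicategory

lemma generic_comparison {X Z : B} {c : X ⟶ Z} {Y : B} {E E' G : Fac c Y}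
    (hE : IsGeneric E) (hE' : IsGeneric E')
    (u : E.fst ⟶ G.fst) (v : E.snd ⟶ G.snd)
    (hG : G.cell = E.cell ≫ (u ▷ E.snd) ≫ (G.fst ◁ v))
    (u' : E'.fst ⟶ G.fst) (v' : E'.snd ⟶ G.snd)
    (hG' : G.cell = E'.cell ≫ (u' ▷ E'.snd) ≫ (G.fst ◁ v')) :
    ∃ (φ : E.fst ≅ E'.fst) (ψ : E.snd ≅ E'.snd),
      E'.cell = E.cell ≫ (φ.hom ▷ E.snd) ≫ (E'.fst ◁ ψ.hom) ∧
      u = φ.hom ≫ u' ∧ v = ψ.hom ≫ v' := by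
  have cE : Connected E G := Relation.EqvGen.rel _ _ ⟨u, v, hG⟩
  have cE' : Connected E' G := Relation.EqvGen.rel _ _ ⟨u', v', hG'⟩
  have cEE' : Connected E E' := Relation.EqvGen.trans _ _ _ cE (Relation.EqvGen.symm _ _ cE')
  obtain ⟨⟨p, q⟩, hpq, hpquniq⟩ := hE E' cEE'
  obtain ⟨⟨p', q'⟩, hp'q', hp'q'uniq⟩ := hE' E (Relation.EqvGen.symm _ _ cEE')
  -- p ≫ p' = 𝟙, q ≫ q' = 𝟙
  obtain ⟨⟨w1, w2⟩, hw, hwuniq⟩ := hE E (Relation.EqvGen.refl E)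
  have hid : ((𝟙 E.fst, 𝟙 E.snd) : (E.fst ⟶ E.fst) × (E.snd ⟶ E.snd)) = (w1, w2) :=
    hwuniq _ (by simp)
  have hcomp : ((p ≫ p', q ≫ q') : (E.fst ⟶ E.fst) × (E.snd ⟶ E.snd)) = (w1, w2) := by
    refine hwuniq _ ?_
    simp only [comp_whiskerRight, Bicategory.whiskerLeft_comp, Category.assoc]
    rw [reassoc_of% (whisker_exchange p' q).symm]
    rw [reassoc_of% hpq.symm]
    exact hp'q'
  have h1 : p ≫ p' = 𝟙 E.fst := by
    have := hcomp.trans hid.symm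
    exact (congrArg Prod.fst this)
  have h2 : q ≫ q' = 𝟙 E.snd := congrArg Prod.snd (hcomp.trans hid.symm)
  obtain ⟨⟨z1, z2⟩, hz, hzuniq⟩ := hE' E' (Relation.EqvGen.refl E')
  have hid' : ((𝟙 E'.fst, 𝟙 E'.snd) : (E'.fst ⟶ E'.fst) × (E'.snd ⟶ E'.snd)) = (z1, z2) :=
    hzuniq _ (by simp)
  have hcomp' : ((p' ≫ p, q' ≫ q) : (E'.fst ⟶ E'.fst) × (E'.snd ⟶ E'.snd)) = (z1, z2) := by
    refine hzuniq _ ?_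
    simp only [comp_whiskerRight, Bicategory.whiskerLeft_comp, Category.assoc]
    rw [reassoc_of% (whisker_exchange p q').symm]
    rw [reassoc_of% hp'q'.symm]
    exact hpq
  have h3 : p' ≫ p = 𝟙 E'.fst := congrArg Prod.fst (hcomp'.trans hid'.symm)
  have h4 : q' ≫ q = 𝟙 E'.snd := congrArg Prod.snd (hcomp'.trans hid'.symm)
  -- compatibility with (u, v)
  obtain ⟨⟨t1, t2⟩, ht, htuniq⟩ := hE G cE
  have huv : ((u, v) : (E.fst ⟶ G.fst) × (E.snd ⟶ G.snd)) = (t1, t2) := htuniq _ hG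
  have hcv : ((p ≫ u', q ≫ v') : (E.fst ⟶ G.fst) × (E.snd ⟶ G.snd)) = (t1, t2) := by
    refine htuniq _ ?_
    simp only [comp_whiskerRight, Bicategory.whiskerLeft_comp, Category.assoc]
    rw [reassoc_of% (whisker_exchange u' q).symm]
    rw [reassoc_of% hpq.symm]
    exact hG'
  have h5 : u = p ≫ u' := congrArg Prod.fst (huv.trans hcv.symm)
  have h6 : v = q ≫ v' := congrArg Prod.snd (huv.trans hcv.symm)
  exact ⟨⟨p, p', h1, h3⟩, ⟨q, q', h2, h4⟩, hpq, h5, h6⟩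


lemma lambda_inv_generic (hB : IsGenericBicategory B) (X : B) :
    IsGeneric (⟨𝟙 X, 𝟙 X, (λ_ (𝟙 X)).inv⟩ : Fac (𝟙 X) X) := by
  obtain ⟨⟨l, r, δ⟩, hF, u, v, huv⟩ := hB (𝟙 X) X ⟨𝟙 X, 𝟙 X, (λ_ (𝟙 X)).inv⟩
  dsimp at u v huv ⊢
  set i : 𝟙 X ⟶ l := δ ≫ (l ◁ v) ≫ (ρ_ l).hom with hi
  set j : 𝟙 X ⟶ r := δ ≫ (u ▷ r) ≫ (λ_ r).hom with hj
  have hiu : i ≫ u = 𝟙 (𝟙 X) := by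
    rw [hi]
    simp only [Category.assoc]
    rw [← rightUnitor_naturality u]
    rw [reassoc_of% (whisker_exchange u v)]
    rw [reassoc_of% huv.symm]
    rw [← unitors_equal]
    simp
  have hjv : j ≫ v = 𝟙 (𝟙 X) := by
    rw [hj]
    simp only [Category.assoc]
    rw [← leftUnitor_naturality v]
    rw [reassoc_of% huv.symm]
    simp
  -- the key identity: λ⁻¹ ≫ (i ▷ 𝟙) = δ ≫ (l ◁ v)
  have hkey : (λ_ (𝟙 X)).inv ≫ (i ▷ 𝟙 X) = δ ≫ (l ◁ v) := by
    rw [unitors_inv_equal, ← rightUnitor_inv_naturality i, hi]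
    simp
  have hui : u ≫ i = 𝟙 l := by
    obtain ⟨⟨w1, w2⟩, hw, hwuniq⟩ := hF ⟨l, 𝟙 X, δ ≫ (l ◁ v)⟩
      (Relation.EqvGen.rel _ _ ⟨𝟙 l, v, by simp⟩)
    have e1 : ((𝟙 l, v) : (l ⟶ l) × (r ⟶ 𝟙 X)) = (w1, w2) := hwuniq _ (by simp)
    have e2 : ((u ≫ i, v) : (l ⟶ l) × (r ⟶ 𝟙 X)) = (w1, w2) := by
      refine hwuniq _ ?_
      dsimp
      simp only [comp_whiskerRight, Category.assoc]
      rw [← whisker_exchange i v]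
      rw [reassoc_of% huv.symm]
      exact hkey.symm
    exact (congrArg Prod.fst (e1.trans e2.symm)).symm
  have hvj : v ≫ j = 𝟙 r := by
    obtain ⟨⟨w1, w2⟩, hw, hwuniq⟩ := hF ⟨𝟙 X, r, δ ≫ (u ▷ r)⟩
      (Relation.EqvGen.rel _ _ ⟨u, 𝟙 r, by simp⟩)
    have e1 : ((u, 𝟙 r) : (l ⟶ 𝟙 X) × (r ⟶ r)) = (w1, w2) := hwuniq _ (by simp)
    have e2 : ((u, v ≫ j) : (l ⟶ 𝟙 X) × (r ⟶ r)) = (w1, w2) := by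
      refine hwuniq _ ?_
      dsimp
      simp only [Bicategory.whiskerLeft_comp, Category.assoc]
      rw [reassoc_of% huv.symm, hj]
      rw [← leftUnitor_inv_naturality (δ ≫ (u ▷ r) ≫ (λ_ r).hom)]
      simp
    exact (congrArg Prod.snd (e1.trans e2.symm)).symm
  have hdelta : δ = (λ_ (𝟙 X)).inv ≫ (i ▷ 𝟙 X) ≫ (l ◁ j) := by
    rw [reassoc_of% hkey, ← Bicategory.whiskerLeft_comp, hvj]
    simp
  intro G hconn
  have hconnF : Connected (⟨l, r, δ⟩ : Fac (𝟙 X) X) G :=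
    Relation.EqvGen.trans _ _ _ (Relation.EqvGen.rel _ _ ⟨u, v, huv⟩) hconn
  obtain ⟨⟨p, q⟩, hpq, hpquniq⟩ := hF G hconnF
  dsimp at hpq hpquniq
  refine ⟨(i ≫ p, j ≫ q), ?_, ?_⟩
  · dsimp
    simp only [comp_whiskerRight, Bicategory.whiskerLeft_comp, Category.assoc]
    rw [reassoc_of% (whisker_exchange p j).symm]
    rw [reassoc_of% hkey]
    rw [← Bicategory.whiskerLeft_comp_assoc, hvj]
    simpa using hpq
  · rintro ⟨p', q'⟩ h'
    dsimp at h'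
    have hfill : G.cell = δ ≫ ((u ≫ p') ▷ r) ≫ (G.fst ◁ (v ≫ q')) := by
      simp only [comp_whiskerRight, Bicategory.whiskerLeft_comp, Category.assoc]
      rw [reassoc_of% (whisker_exchange p' v).symm]
      rw [reassoc_of% huv.symm]
      exact h'
    have := hpquniq (u ≫ p', v ≫ q') hfill
    have hp' : u ≫ p' = p := congrArg Prod.fst this
    have hq' : v ≫ q' = q := congrArg Prod.snd this
    have : p' = i ≫ p := by rw [← hp', ← Category.assoc, hiu, Category.id_comp]
    have h2 : q' = j ≫ q := by rw [← hq', ← Category.assoc, hjv, Category.id_comp]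
    simp [this, h2]


end GenericBicat


/-- In a generic bicategory, for every object `X` the inverse unitor
`λ⁻¹ : 𝟙 X ⟶ 𝟙 X ≫ 𝟙 X` is itself a generic 2-cell, and moreover it is an initial
generic: every 2-cell `𝟙 X ⟶ a ≫ b` factors through it as in Axiom 1. -/
theorem id_unitor_initial_generic {B : Type u} [Bicategory.{w, v} B]
    (hB : IsGenericBicategory B) (X : B) :
    IsGeneric (⟨𝟙 X, 𝟙 X, (λ_ (𝟙 X)).inv⟩ : Fac (𝟙 X) X) ∧
    IsInitialGeneric (𝟙 X) (𝟙 X) (λ_ (𝟙 X)).inv := by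
  have hgen := lambda_inv_generic hB X
  refine ⟨hgen, hgen, ⟨⟨(λ_ (𝟙 X)).hom, by simp, by simp⟩⟩, ?_⟩
  intro Y' a b γ
  constructor
  · obtain ⟨⟨h, k, η⟩, hgen', u₀, v₀, hfac⟩ := hB (𝟙 X) Y' ⟨a, b, γ⟩
    dsimp at u₀ v₀ hfac
    refine ⟨h, k, η, (λ_ h).hom ≫ u₀, (ρ_ k).hom ≫ v₀, hgen', ?_⟩
    rw [pasteFac_lambda]
    simpa using hfac
  · intro h k η α β hη hγ h' k' η' α' β' hη' hγ'
    rw [pasteFac_lambda] at hγ hγ'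
    obtain ⟨φ, ψ, hcell, hu, hv⟩ := generic_comparison (E := ⟨h, k, η⟩) (E' := ⟨h', k', η'⟩)
      (G := ⟨a, b, γ⟩) hη hη' ((λ_ h).inv ≫ α) ((ρ_ k).inv ≫ β) hγ
      ((λ_ h').inv ≫ α') ((ρ_ k').inv ≫ β') hγ'
    refine ⟨φ, ψ, hcell, ?_, ?_⟩
    · have hα : α = (λ_ h).hom ≫ ((λ_ h).inv ≫ α) := by simp
      rw [hα, hu, ← leftUnitor_naturality_assoc]
      simp
    · have hβ : β = (ρ_ k).hom ≫ ((ρ_ k).inv ≫ β) := by simp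
      rw [hβ, hv, ← rightUnitor_naturality_assoc]
      simp
end

section
/- In a generic bicategory, a 2-cell δ : c ⟹ r ∘ m ∘ l is 3-ary generic if and only if it factors as a 2-ary generic σ₁ : c ⟹ q ∘ l followed by the whiskering of a 2-ary generic σ₂ : q ⟹ r ∘ m by l; equivalently, if and only if it factors as a 2-ary generic c ⟹ r ∘ p followed by the whiskering of a 2-ary generic p ⟹ m ∘ l by r. -/
open CategoryTheory CategoryTheory.Bicategory

universe w v u

namespace GenericBicat

variable {B : Type u} [Bicategory.{w, v} B]

/-- A factorization of `c` as a ternary composite, with a 2-cell. -/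
structure Fac3 {X Z : B} (c : X ⟶ Z) (Y₁ Y₂ : B) where
  f1 : X ⟶ Y₁
  f2 : Y₁ ⟶ Y₂
  f3 : Y₂ ⟶ Z
  cell : c ⟶ f1 ≫ f2 ≫ f3

/-- Morphisms of ternary factorizations: coherent triples of 2-cells. -/
def Fac3Hom {X Z : B} {c : X ⟶ Z} {Y₁ Y₂ : B} (F G : Fac3 c Y₁ Y₂) : Prop :=
  ∃ (u : F.f1 ⟶ G.f1) (v : F.f2 ⟶ G.f2) (w : F.f3 ⟶ G.f3),
    G.cell = F.cell ≫ (u ▷ (F.f2 ≫ F.f3)) ≫ (G.f1 ◁ (v ▷ F.f3)) ≫ (G.f1 ◁ (G.f2 ◁ w))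

/-- A 2-cell `c ⟶ x ≫ y ≫ z` is 3-ary generic if it is initial in its connected component
of the category of ternary factorizations. -/
def IsGeneric3 {X Z : B} {c : X ⟶ Z} {Y₁ Y₂ : B} (F : Fac3 c Y₁ Y₂) : Prop :=
  ∀ G : Fac3 c Y₁ Y₂, Relation.EqvGen Fac3Hom F G →
    ∃! t : (F.f1 ⟶ G.f1) × (F.f2 ⟶ G.f2) × (F.f3 ⟶ G.f3),
      G.cell = F.cell ≫ (t.1 ▷ (F.f2 ≫ F.f3)) ≫ (G.f1 ◁ (t.2.1 ▷ F.f3)) ≫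
        (G.f1 ◁ (G.f2 ◁ t.2.2))

end GenericBicat

/-!
A composite `σ₁ ≫ (l ◁ σ₂)` of 2-ary generics is 3-ary generic: being a ternary factorization
that factors through `σ₁` with remaining 2-cell connected to `σ₂` is invariant along the
connected component (genericity of `σ₁` makes that factorization unique), and the uniqueness
clauses for `σ₁` and `σ₂` combine into the one for the composite. Conversely, in a generic
bicategory every `δ` receives a map from such a composite; when `δ` is itself 3-ary generic this
map is invertible, and transporting `σ₁`, `σ₂` along it exhibits `δ` as a composite of generics.
The second characterisation is the mirror image, grouping the first two legs instead of the
last two.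
-/

theorem Relation.EqvGen.iff_of_rel {α : Type*} {r : α → α → Prop} (P : α → Prop)
    (hP : ∀ a b, r a b → (P a ↔ P b)) {a b : α} (h : Relation.EqvGen r a b) : P a ↔ P b := by
  induction h with
  | rel _ _ h => exact hP _ _ h
  | refl => exact Iff.rfl
  | symm _ _ _ ih => exact ih.symm
  | trans _ _ _ _ _ ih₁ ih₂ => exact ih₁.trans ih₂

namespace GenericBicat

variable {B : Type u} [Bicategory.{w, v} B]

section Pasting

variable {X Y₁ Y₂ Z : B}

theorem whisker_comp_whisker {a a' a'' : X ⟶ Y₁} {b b' b'' : Y₁ ⟶ Z}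
    (u : a ⟶ a') (v : b ⟶ b') (u' : a' ⟶ a'') (v' : b' ⟶ b'') :
    (u ▷ b) ≫ (a' ◁ v) ≫ (u' ▷ b') ≫ (a'' ◁ v') = ((u ≫ u') ▷ b) ≫ (a'' ◁ (v ≫ v')) := by
  simp only [Bicategory.whiskerLeft_comp, comp_whiskerRight, Category.assoc, whisker_exchange_assoc]

theorem whisker3_comp_whisker3 {f1 g1 h1 : X ⟶ Y₁} {f2 g2 h2 : Y₁ ⟶ Y₂} {f3 g3 h3 : Y₂ ⟶ Z}
    (u : f1 ⟶ g1) (v : f2 ⟶ g2) (w : f3 ⟶ g3) (u' : g1 ⟶ h1) (v' : g2 ⟶ h2) (w' : g3 ⟶ h3) :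
    (u ▷ (f2 ≫ f3)) ≫ (g1 ◁ (v ▷ f3)) ≫ (g1 ◁ (g2 ◁ w)) ≫
      (u' ▷ (g2 ≫ g3)) ≫ (h1 ◁ (v' ▷ g3)) ≫ (h1 ◁ (h2 ◁ w')) =
      ((u ≫ u') ▷ (f2 ≫ f3)) ≫ (h1 ◁ ((v ≫ v') ▷ f3)) ≫ (h1 ◁ (h2 ◁ (w ≫ w'))) := by
  rw [← whiskerLeft_comp_assoc, ← Bicategory.whiskerLeft_comp, whisker_comp_whisker]
  simp only [Category.assoc, whisker_comp_whisker, Bicategory.whiskerLeft_comp]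

theorem whisker3_comp_associator_inv {f1 g1 : X ⟶ Y₁} {f2 g2 : Y₁ ⟶ Y₂} {f3 g3 : Y₂ ⟶ Z}
    (u : f1 ⟶ g1) (v : f2 ⟶ g2) (w : f3 ⟶ g3) :
    (u ▷ (f2 ≫ f3)) ≫ (g1 ◁ (v ▷ f3)) ≫ (g1 ◁ (g2 ◁ w)) ≫ (α_ g1 g2 g3).inv =
      (α_ f1 f2 f3).inv ≫ (((u ▷ f2) ≫ (g1 ◁ v)) ▷ f3) ≫ ((g1 ≫ g2) ◁ w) := by
  rw [associator_inv_naturality_right, associator_inv_naturality_middle_assoc,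
    associator_inv_naturality_left_assoc, comp_whiskerRight, Category.assoc]

variable {c : X ⟶ Z} {l g1 : X ⟶ Y₁} {m g2 : Y₁ ⟶ Y₂} {r g3 : Y₂ ⟶ Z}

theorem comp_whiskerLeft_whisker3 {q : Y₁ ⟶ Z} (σ₁ : c ⟶ l ≫ q) (σ₂ : q ⟶ m ≫ r)
    (u : l ⟶ g1) (v : m ⟶ g2) (w : r ⟶ g3) :
    (σ₁ ≫ (l ◁ σ₂)) ≫ (u ▷ (m ≫ r)) ≫ (g1 ◁ (v ▷ r)) ≫ (g1 ◁ (g2 ◁ w)) =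
      σ₁ ≫ (u ▷ q) ≫ (g1 ◁ (σ₂ ≫ (v ▷ r) ≫ (g2 ◁ w))) := by
  simp only [Bicategory.whiskerLeft_comp, Category.assoc, whisker_exchange_assoc]

theorem comp_whiskerRight_whisker3 {p : X ⟶ Y₂} (σ₃ : c ⟶ p ≫ r) (σ₄ : p ⟶ l ≫ m)
    (u : l ⟶ g1) (v : m ⟶ g2) (w : r ⟶ g3) :
    ((σ₃ ≫ (σ₄ ▷ r) ≫ (α_ l m r).hom) ≫ (u ▷ (m ≫ r)) ≫ (g1 ◁ (v ▷ r)) ≫ (g1 ◁ (g2 ◁ w))) ≫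
      (α_ g1 g2 g3).inv = σ₃ ≫ ((σ₄ ≫ (u ▷ m) ≫ (g1 ◁ v)) ▷ r) ≫ ((g1 ≫ g2) ◁ w) := by
  simp only [Category.assoc, whisker3_comp_associator_inv, Iso.hom_inv_id_assoc,
    comp_whiskerRight]

end Pasting

section Generic

variable {X Y Z : B} {c : X ⟶ Z}

theorem Fac.cell_eq_comp {F G H : Fac c Y} {u : F.fst ⟶ G.fst} {v : F.snd ⟶ G.snd}
    {u' : G.fst ⟶ H.fst} {v' : G.snd ⟶ H.snd}
    (hG : G.cell = F.cell ≫ (u ▷ F.snd) ≫ (G.fst ◁ v))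
    (hH : H.cell = G.cell ≫ (u' ▷ G.snd) ≫ (H.fst ◁ v')) :
    H.cell = F.cell ≫ ((u ≫ u') ▷ F.snd) ≫ (H.fst ◁ (v ≫ v')) := by
  rw [hH, hG, Category.assoc, Category.assoc, whisker_comp_whisker]

theorem IsGeneric.of_iso {F : Fac c Y} (hF : IsGeneric F) {a : X ⟶ Y} {b : Y ⟶ Z}
    (u : F.fst ⟶ a) (v : F.snd ⟶ b) [IsIso u] [IsIso v] {τ : c ⟶ a ≫ b}
    (hτ : τ = F.cell ≫ (u ▷ F.snd) ≫ (a ◁ v)) :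
    IsGeneric (⟨a, b, τ⟩ : Fac c Y) := by
  intro G hG
  obtain ⟨⟨x, y⟩, hxy, huniq⟩ := hF G (.trans _ _ _ (.rel _ _ ⟨u, v, hτ⟩) hG)
  have hpre : ∀ (x' : a ⟶ G.fst) (y' : b ⟶ G.snd),
      τ ≫ (x' ▷ b) ≫ (G.fst ◁ y') = F.cell ≫ ((u ≫ x') ▷ F.snd) ≫ (G.fst ◁ (v ≫ y')) := by
    intro x' y'
    rw [hτ, Category.assoc, Category.assoc, whisker_comp_whisker]
  refine ⟨(inv u ≫ x, inv v ≫ y), by simpa only [hpre, IsIso.hom_inv_id_assoc] using hxy, ?_⟩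
  rintro ⟨x', y'⟩ h
  obtain ⟨hx, hy⟩ := Prod.mk.inj (huniq (u ≫ x', v ≫ y') (h.trans (hpre x' y')))
  exact Prod.ext (by simp [← hx]) (by simp [← hy])

end Generic

variable {X Y₁ Y₂ Z : B} {c : X ⟶ Z}

namespace Fac3

def curryL (G : Fac3 c Y₁ Y₂) : Fac c Y₁ := ⟨G.f1, G.f2 ≫ G.f3, G.cell⟩

def curryR (G : Fac3 c Y₁ Y₂) : Fac c Y₂ := ⟨G.f1 ≫ G.f2, G.f3, G.cell ≫ (α_ G.f1 G.f2 G.f3).inv⟩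

variable {G H : Fac3 c Y₁ Y₂} {a : G.f1 ⟶ H.f1} {b : G.f2 ⟶ H.f2} {e : G.f3 ⟶ H.f3}

theorem curryL_cell_eq
    (h : H.cell = G.cell ≫ (a ▷ (G.f2 ≫ G.f3)) ≫ (H.f1 ◁ (b ▷ G.f3)) ≫ (H.f1 ◁ (H.f2 ◁ e))) :
    H.curryL.cell =
      G.curryL.cell ≫ (a ▷ G.curryL.snd) ≫ (H.curryL.fst ◁ ((b ▷ G.f3) ≫ (H.f2 ◁ e))) := by
  simp only [curryL, h, Bicategory.whiskerLeft_comp]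

theorem curryR_cell_eq
    (h : H.cell = G.cell ≫ (a ▷ (G.f2 ≫ G.f3)) ≫ (H.f1 ◁ (b ▷ G.f3)) ≫ (H.f1 ◁ (H.f2 ◁ e))) :
    H.curryR.cell =
      G.curryR.cell ≫ (((a ▷ G.f2) ≫ (H.f1 ◁ b)) ▷ G.curryR.snd) ≫ (H.curryR.fst ◁ e) := by
  simp only [curryR, h, Category.assoc, whisker3_comp_associator_inv]

end Fac3

theorem IsGeneric3.eq_id {F : Fac3 c Y₁ Y₂} (hF : IsGeneric3 F) {u : F.f1 ⟶ F.f1}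
    {v : F.f2 ⟶ F.f2} {w : F.f3 ⟶ F.f3}
    (h : F.cell ≫ (u ▷ (F.f2 ≫ F.f3)) ≫ (F.f1 ◁ (v ▷ F.f3)) ≫ (F.f1 ◁ (F.f2 ◁ w)) = F.cell) :
    u = 𝟙 _ ∧ v = 𝟙 _ ∧ w = 𝟙 _ := by
  obtain ⟨_, -, huniq⟩ := hF F (.refl _)
  have := (huniq (u, v, w) h.symm).trans (huniq (𝟙 _, 𝟙 _, 𝟙 _) (by simp)).symm
  simpa only [Prod.mk.injEq] using this

theorem IsGeneric3.isIso_of_cell_eq {F G : Fac3 c Y₁ Y₂} (hF : IsGeneric3 F) (hG : IsGeneric3 G)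
    {u : F.f1 ⟶ G.f1} {v : F.f2 ⟶ G.f2} {w : F.f3 ⟶ G.f3}
    (h : G.cell = F.cell ≫ (u ▷ (F.f2 ≫ F.f3)) ≫ (G.f1 ◁ (v ▷ F.f3)) ≫ (G.f1 ◁ (G.f2 ◁ w))) :
    IsIso u ∧ IsIso v ∧ IsIso w := by
  obtain ⟨⟨u', v', w'⟩, h', -⟩ := hG F (.symm _ _ (.rel _ _ ⟨u, v, w, h⟩))
  obtain ⟨hu, hv, hw⟩ := hF.eq_id (u := u ≫ u') (v := v ≫ v') (w := w ≫ w') <| by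
    rw [← whisker3_comp_whisker3, ← reassoc_of% h, ← h']
  obtain ⟨hu', hv', hw'⟩ := hG.eq_id (u := u' ≫ u) (v := v' ≫ v) (w := w' ≫ w) <| by
    rw [← whisker3_comp_whisker3, ← reassoc_of% h', ← h]
  exact ⟨⟨u', hu, hu'⟩, ⟨v', hv, hv'⟩, ⟨w', hw, hw'⟩⟩

section Left

variable {l : X ⟶ Y₁} {m : Y₁ ⟶ Y₂} {r : Y₂ ⟶ Z} {q : Y₁ ⟶ Z}

def FactorsLeft (σ₁ : c ⟶ l ≫ q) (σ₂ : q ⟶ m ≫ r) (G : Fac3 c Y₁ Y₂) : Prop :=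
  ∃ (u : l ⟶ G.f1) (t : q ⟶ G.f2 ≫ G.f3),
    G.curryL.cell = σ₁ ≫ (u ▷ q) ≫ (G.curryL.fst ◁ t) ∧
      Connected (⟨m, r, σ₂⟩ : Fac q Y₂) ⟨G.f2, G.f3, t⟩

theorem factorsLeft_iff_of_fac3Hom {σ₁ : c ⟶ l ≫ q} (σ₂ : q ⟶ m ≫ r)
    (h₁ : IsGeneric (⟨l, q, σ₁⟩ : Fac c Y₁)) {G H : Fac3 c Y₁ Y₂} (hGH : Fac3Hom G H) :
    FactorsLeft σ₁ σ₂ G ↔ FactorsLeft σ₁ σ₂ H := by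
  obtain ⟨a, b, e, hH⟩ := hGH
  have hcurry := Fac3.curryL_cell_eq hH
  constructor
  · rintro ⟨u, t, hG, ht⟩
    exact ⟨u ≫ a, t ≫ (b ▷ G.f3) ≫ (H.f2 ◁ e),
      Fac.cell_eq_comp (F := ⟨l, q, σ₁⟩) hG hcurry, .trans _ _ _ ht (.rel _ _ ⟨b, e, rfl⟩)⟩
  · rintro ⟨uH, tH, hH', htH⟩
    have hconnH : Connected (⟨l, q, σ₁⟩ : Fac c Y₁) H.curryL := .rel _ _ ⟨uH, tH, hH'⟩
    obtain ⟨⟨u, t⟩, hG, -⟩ :=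
      h₁ G.curryL (.trans _ _ _ hconnH (.symm _ _ (.rel _ _ ⟨_, _, hcurry⟩)))
    obtain ⟨-, htH_eq⟩ := Prod.mk.inj ((h₁ _ hconnH).unique (Fac.cell_eq_comp hG hcurry) hH')
    exact ⟨u, t, hG, .trans _ _ _ htH (.symm _ _ (.rel _ _ ⟨b, e, htH_eq.symm⟩))⟩

theorem isGeneric3_comp_whiskerLeft {σ₁ : c ⟶ l ≫ q} {σ₂ : q ⟶ m ≫ r}
    (h₁ : IsGeneric (⟨l, q, σ₁⟩ : Fac c Y₁)) (h₂ : IsGeneric (⟨m, r, σ₂⟩ : Fac q Y₂)) :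
    IsGeneric3 (⟨l, m, r, σ₁ ≫ (l ◁ σ₂)⟩ : Fac3 c Y₁ Y₂) := by
  intro G hG
  obtain ⟨u, t, hu, ht⟩ : FactorsLeft σ₁ σ₂ G :=
    (Relation.EqvGen.iff_of_rel (FactorsLeft σ₁ σ₂)
      (fun _ _ => factorsLeft_iff_of_fac3Hom σ₂ h₁) hG).1
      ⟨𝟙 l, σ₂, by simp [Fac3.curryL], .refl _⟩
  obtain ⟨⟨v, w⟩, hvw, hvw_uniq⟩ := h₂ ⟨G.f2, G.f3, t⟩ ht
  dsimp only at hvw hvw_uniq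
  refine ⟨(u, v, w), ?_, ?_⟩
  · dsimp only
    rw [comp_whiskerLeft_whisker3, ← hvw]
    exact hu
  · rintro ⟨u', v', w'⟩ h
    dsimp only at h
    rw [comp_whiskerLeft_whisker3] at h
    obtain ⟨rfl, ht'⟩ := Prod.mk.inj ((h₁ G.curryL (.rel _ _ ⟨u, t, hu⟩)).unique h hu)
    obtain ⟨rfl, rfl⟩ := Prod.mk.inj (hvw_uniq (v', w') ht'.symm)
    rfl

end Left

section Right

variable {l : X ⟶ Y₁} {m : Y₁ ⟶ Y₂} {r : Y₂ ⟶ Z} {p : X ⟶ Y₂}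

def FactorsRight (σ₃ : c ⟶ p ≫ r) (σ₄ : p ⟶ l ≫ m) (G : Fac3 c Y₁ Y₂) : Prop :=
  ∃ (s : p ⟶ G.f1 ≫ G.f2) (w : r ⟶ G.f3),
    G.curryR.cell = σ₃ ≫ (s ▷ r) ≫ (G.curryR.fst ◁ w) ∧
      Connected (⟨l, m, σ₄⟩ : Fac p Y₁) ⟨G.f1, G.f2, s⟩

theorem factorsRight_iff_of_fac3Hom {σ₃ : c ⟶ p ≫ r} (σ₄ : p ⟶ l ≫ m)
    (h₃ : IsGeneric (⟨p, r, σ₃⟩ : Fac c Y₂)) {G H : Fac3 c Y₁ Y₂} (hGH : Fac3Hom G H) :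
    FactorsRight σ₃ σ₄ G ↔ FactorsRight σ₃ σ₄ H := by
  obtain ⟨a, b, e, hH⟩ := hGH
  have hcurry := Fac3.curryR_cell_eq hH
  constructor
  · rintro ⟨s, w, hG, hs⟩
    exact ⟨s ≫ (a ▷ G.f2) ≫ (H.f1 ◁ b), w ≫ e,
      Fac.cell_eq_comp (F := ⟨p, r, σ₃⟩) hG hcurry, .trans _ _ _ hs (.rel _ _ ⟨a, b, rfl⟩)⟩
  · rintro ⟨sH, wH, hH', hsH⟩
    have hconnH : Connected (⟨p, r, σ₃⟩ : Fac c Y₂) H.curryR := .rel _ _ ⟨sH, wH, hH'⟩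
    obtain ⟨⟨s, w⟩, hG, -⟩ :=
      h₃ G.curryR (.trans _ _ _ hconnH (.symm _ _ (.rel _ _ ⟨_, _, hcurry⟩)))
    obtain ⟨hsH_eq, -⟩ := Prod.mk.inj ((h₃ _ hconnH).unique (Fac.cell_eq_comp hG hcurry) hH')
    exact ⟨s, w, hG, .trans _ _ _ hsH (.symm _ _ (.rel _ _ ⟨a, b, hsH_eq.symm⟩))⟩

theorem isGeneric3_comp_whiskerRight {σ₃ : c ⟶ p ≫ r} {σ₄ : p ⟶ l ≫ m}
    (h₃ : IsGeneric (⟨p, r, σ₃⟩ : Fac c Y₂)) (h₄ : IsGeneric (⟨l, m, σ₄⟩ : Fac p Y₁)) :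
    IsGeneric3 (⟨l, m, r, σ₃ ≫ (σ₄ ▷ r) ≫ (α_ l m r).hom⟩ : Fac3 c Y₁ Y₂) := by
  intro G hG
  obtain ⟨s, w, hs, hconn⟩ : FactorsRight σ₃ σ₄ G :=
    (Relation.EqvGen.iff_of_rel (FactorsRight σ₃ σ₄)
      (fun _ _ => factorsRight_iff_of_fac3Hom σ₄ h₃) hG).1
      ⟨σ₄, 𝟙 r, by simp [Fac3.curryR], .refl _⟩
  obtain ⟨⟨u, v⟩, huv, huv_uniq⟩ := h₄ ⟨G.f1, G.f2, s⟩ hconn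
  dsimp only at huv huv_uniq
  refine ⟨(u, v, w), ?_, ?_⟩
  · dsimp only
    rw [← cancel_mono (α_ G.f1 G.f2 G.f3).inv, comp_whiskerRight_whisker3, ← huv]
    exact hs
  · rintro ⟨u', v', w'⟩ h
    dsimp only at h
    have h' : G.curryR.cell =
        σ₃ ≫ ((σ₄ ≫ (u' ▷ m) ≫ (G.f1 ◁ v')) ▷ r) ≫ ((G.f1 ≫ G.f2) ◁ w') := by
      simp only [Fac3.curryR, h, comp_whiskerRight_whisker3]
    obtain ⟨hs', rfl⟩ := Prod.mk.inj ((h₃ G.curryR (.rel _ _ ⟨s, w, hs⟩)).unique h' hs)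
    obtain ⟨rfl, rfl⟩ := Prod.mk.inj (huv_uniq (u', v') hs'.symm)
    rfl

end Right

section Converse

variable {l : X ⟶ Y₁} {m : Y₁ ⟶ Y₂} {r : Y₂ ⟶ Z} {δ : c ⟶ l ≫ m ≫ r}

theorem IsGeneric3.exists_comp_whiskerLeft (hB : IsGenericBicategory B)
    (hδ : IsGeneric3 (⟨l, m, r, δ⟩ : Fac3 c Y₁ Y₂)) :
    ∃ (q : Y₁ ⟶ Z) (σ₁ : c ⟶ l ≫ q) (σ₂ : q ⟶ m ≫ r),
      IsGeneric (⟨l, q, σ₁⟩ : Fac c Y₁) ∧ IsGeneric (⟨m, r, σ₂⟩ : Fac q Y₂) ∧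
        δ = σ₁ ≫ (l ◁ σ₂) := by
  obtain ⟨⟨l₀, q, σ₁⟩, h₁, u, t, ht⟩ := hB c Y₁ ⟨l, m ≫ r, δ⟩
  obtain ⟨⟨m₀, r₀, σ₂⟩, h₂, v, w, hw⟩ := hB q Y₂ ⟨m, r, t⟩
  dsimp only at u v w ht hw
  have hδK : δ = (σ₁ ≫ (l₀ ◁ σ₂)) ≫ (u ▷ (m₀ ≫ r₀)) ≫ (l ◁ (v ▷ r₀)) ≫ (l ◁ (m ◁ w)) := by
    rw [comp_whiskerLeft_whisker3, ← hw, ← ht]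
  obtain ⟨_, _, _⟩ := (isGeneric3_comp_whiskerLeft h₁ h₂).isIso_of_cell_eq hδ hδK
  refine ⟨q, σ₁ ≫ (u ▷ q), σ₂ ≫ (v ▷ r₀) ≫ (m ◁ w), h₁.of_iso u (𝟙 q) (by simp),
    h₂.of_iso v w rfl, ?_⟩
  rw [hδK, comp_whiskerLeft_whisker3, Category.assoc]

theorem IsGeneric3.exists_comp_whiskerRight (hB : IsGenericBicategory B)
    (hδ : IsGeneric3 (⟨l, m, r, δ⟩ : Fac3 c Y₁ Y₂)) :
    ∃ (p : X ⟶ Y₂) (σ₃ : c ⟶ p ≫ r) (σ₄ : p ⟶ l ≫ m),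
      IsGeneric (⟨p, r, σ₃⟩ : Fac c Y₂) ∧ IsGeneric (⟨l, m, σ₄⟩ : Fac p Y₁) ∧
        δ = σ₃ ≫ (σ₄ ▷ r) ≫ (α_ l m r).hom := by
  obtain ⟨⟨p, r₀, σ₃⟩, h₃, s, w, hw⟩ := hB c Y₂ ⟨l ≫ m, r, δ ≫ (α_ l m r).inv⟩
  obtain ⟨⟨l₀, m₀, σ₄⟩, h₄, u, v, hv⟩ := hB p Y₁ ⟨l, m, s⟩
  dsimp only at s w u v hw hv
  have hδK : δ = (σ₃ ≫ (σ₄ ▷ r₀) ≫ (α_ l₀ m₀ r₀).hom) ≫ (u ▷ (m₀ ≫ r₀)) ≫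
      (l ◁ (v ▷ r₀)) ≫ (l ◁ (m ◁ w)) := by
    rw [← cancel_mono (α_ l m r).inv, comp_whiskerRight_whisker3, ← hv, hw]
  obtain ⟨_, _, _⟩ := (isGeneric3_comp_whiskerRight h₃ h₄).isIso_of_cell_eq hδ hδK
  refine ⟨p, σ₃ ≫ (p ◁ w), σ₄ ≫ (u ▷ m₀) ≫ (l ◁ v), h₃.of_iso (𝟙 p) w (by simp),
    h₄.of_iso u v rfl, ?_⟩
  rw [← cancel_mono (α_ l m r).inv, hδK, comp_whiskerRight_whisker3]
  simp only [Category.assoc, Iso.hom_inv_id, Category.comp_id, whisker_exchange]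

end Converse

end GenericBicat

open GenericBicat

/-- In a generic bicategory, a 2-cell `δ : c ⟶ l ≫ m ≫ r` is 3-ary generic iff it factors
as a 2-ary generic `σ₁ : c ⟶ l ≫ q` followed by the whiskering by `l` of a 2-ary generic
`σ₂ : q ⟶ m ≫ r`; equivalently, iff it factors as a 2-ary generic `σ₃ : c ⟶ p ≫ r`
followed by the whiskering by `r` of a 2-ary generic `σ₄ : p ⟶ l ≫ m`. -/
theorem generic3_iff_composites {B : Type u} [Bicategory.{w, v} B]
    (hB : IsGenericBicategory B) {X Y₁ Y₂ Z : B} {c : X ⟶ Z}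
    (l : X ⟶ Y₁) (m : Y₁ ⟶ Y₂) (r : Y₂ ⟶ Z) (δ : c ⟶ l ≫ m ≫ r) :
    (IsGeneric3 (⟨l, m, r, δ⟩ : Fac3 c Y₁ Y₂) ↔
      ∃ (q : Y₁ ⟶ Z) (σ₁ : c ⟶ l ≫ q) (σ₂ : q ⟶ m ≫ r),
        IsGeneric (⟨l, q, σ₁⟩ : Fac c Y₁) ∧ IsGeneric (⟨m, r, σ₂⟩ : Fac q Y₂) ∧
          δ = σ₁ ≫ (l ◁ σ₂)) ∧
    (IsGeneric3 (⟨l, m, r, δ⟩ : Fac3 c Y₁ Y₂) ↔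
      ∃ (p : X ⟶ Y₂) (σ₃ : c ⟶ p ≫ r) (σ₄ : p ⟶ l ≫ m),
        IsGeneric (⟨p, r, σ₃⟩ : Fac c Y₂) ∧ IsGeneric (⟨l, m, σ₄⟩ : Fac p Y₁) ∧
          δ = σ₃ ≫ (σ₄ ▷ r) ≫ (α_ l m r).hom) := by
  refine ⟨⟨fun hδ => hδ.exists_comp_whiskerLeft hB, ?_⟩,
    ⟨fun hδ => hδ.exists_comp_whiskerRight hB, ?_⟩⟩
  · rintro ⟨q, σ₁, σ₂, h₁, h₂, rfl⟩
    exact isGeneric3_comp_whiskerLeft h₁ h₂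
  · rintro ⟨p, σ₃, σ₄, h₃, h₄, rfl⟩
    exact isGeneric3_comp_whiskerRight h₃ h₄
end

section
/- Assume C is a generic bicategory in which every 1-cell has an initial generic and initial factorizations yield initial generics (Axioms 1 and 2). If a right unitor isomorphism δ : l ⟹ id ∘ l (viewing it as a generic 2-cell l ⟹ (id) ∘ l with factorization through the target object) is an initial generic, then l is a right adjoint; dually, if a left unitor δ : r ⟹ r ∘ id is an initial generic, then r is a left adjoint. -/
open CategoryTheory CategoryTheory.Bicategory

universe w v u

namespace GenericBicat

variable {B : Type u} [Bicategory.{w, v} B]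

/-- Two 2-cells out of an identity 1-cell can be interchanged. -/
theorem unit_swap {Y : B} {e f : Y ⟶ Y} (x : 𝟙 Y ⟶ e) (y : 𝟙 Y ⟶ f) :
    x ≫ (λ_ e).inv ≫ (y ▷ e) = y ≫ (ρ_ f).inv ≫ (f ◁ x) := by
  calc x ≫ (λ_ e).inv ≫ (y ▷ e)
      = (ρ_ (𝟙 Y)).inv ≫ ((𝟙 Y ◁ x) ≫ (y ▷ e)) := by bicategory
    _ = (ρ_ (𝟙 Y)).inv ≫ ((y ▷ 𝟙 Y) ≫ (f ◁ x)) := by rw [whisker_exchange]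
    _ = y ≫ (ρ_ f).inv ≫ (f ◁ x) := by bicategory

/-- Core of part 1: the factorization data of `(λ_ l).inv` through the initial generic
`(ρ_ l).inv` yields an adjunction `hh ⊣ l`. -/
theorem adjA {X Y : B} (l : X ⟶ Y) (hh : Y ⟶ X) (k : X ⟶ Y)
    (η : 𝟙 Y ⟶ hh ≫ k) (α : l ≫ hh ⟶ 𝟙 X) (β : k ≫ 𝟙 Y ⟶ l)
    (hgen : IsGeneric (⟨hh, k, η⟩ : Fac (𝟙 Y) X))
    (heq : (λ_ l).inv = pasteFac (ρ_ l).inv η α β) :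
    Nonempty (hh ⊣ l) := by
  set βh : k ⟶ l := (ρ_ k).inv ≫ β with hβh
  set u : 𝟙 Y ⟶ hh ≫ l := η ≫ (hh ◁ βh) with hu
  -- right triangle
  have e1 : pasteFac (ρ_ l).inv η α β
      = (ρ_ l).inv ≫ (l ◁ u) ≫ (α_ l hh l).inv ≫ (α ▷ l) := by
    rw [pasteFac, hu, hβh, ← whisker_exchange]; bicategory
  have rt : (l ◁ u) ≫ (α_ l hh l).inv ≫ (α ▷ l) = (ρ_ l).hom ≫ (λ_ l).inv := by
    rw [← cancel_epi (ρ_ l).inv, Iso.inv_hom_id_assoc]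
    exact (heq.trans e1).symm
  -- the left-triangle defect
  set t : hh ⟶ hh :=
    (λ_ hh).inv ≫ (u ▷ hh) ≫ (α_ hh l hh).hom ≫ (hh ◁ α) ≫ (ρ_ hh).hom with ht
  have key : u ≫ (t ▷ l) = u := by
    calc u ≫ (t ▷ l)
        = u ≫ (λ_ (hh ≫ l)).inv ≫ (u ▷ (hh ≫ l)) ≫ (α_ hh l (hh ≫ l)).hom ≫
            (hh ◁ ((α_ l hh l).inv ≫ (α ▷ l) ≫ (λ_ l).hom)) := by
          rw [ht]; bicategory
      _ = u ≫ (ρ_ (hh ≫ l)).inv ≫ ((hh ≫ l) ◁ u) ≫ (α_ hh l (hh ≫ l)).hom ≫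
            (hh ◁ ((α_ l hh l).inv ≫ (α ▷ l) ≫ (λ_ l).hom)) := by
          rw [reassoc_of% unit_swap u u]
      _ = u ≫ (hh ◁ ((ρ_ l).inv ≫ ((l ◁ u) ≫ (α_ l hh l).inv ≫ (α ▷ l)) ≫ (λ_ l).hom)) := by
          bicategory
      _ = u := by rw [rt]; simp
  -- genericity forces t = 𝟙
  have conn : Connected (⟨hh, k, η⟩ : Fac (𝟙 Y) X) (⟨hh, l, u⟩ : Fac (𝟙 Y) X) :=
    Relation.EqvGen.rel _ _ ⟨𝟙 hh, βh, by simp [hu]⟩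
  obtain ⟨p, _, hup⟩ := hgen ⟨hh, l, u⟩ conn
  have h1 : ((𝟙 hh, βh) : (hh ⟶ hh) × (k ⟶ l)) = p := hup _ (by simp [hu])
  have h2 : ((t, βh) : (hh ⟶ hh) × (k ⟶ l)) = p := by
    refine hup _ ?_
    show u = η ≫ (t ▷ k) ≫ (hh ◁ βh)
    rw [← whisker_exchange, ← Category.assoc, ← hu, key]
  have hT : t = 𝟙 hh := congrArg Prod.fst (h2.trans h1.symm)
  -- assemble the adjunction
  refine ⟨⟨u, α, ?_, ?_⟩⟩
  · have : (u ▷ hh) ≫ (α_ hh l hh).hom ≫ (hh ◁ α) = (λ_ hh).hom ≫ (ρ_ hh).inv := by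
      rw [← cancel_epi (λ_ hh).inv, ← cancel_mono (ρ_ hh).hom]
      simpa using hT
    calc leftZigzag u α = (u ▷ hh) ≫ (α_ hh l hh).hom ≫ (hh ◁ α) := by bicategory
    _ = (λ_ hh).hom ≫ (ρ_ hh).inv := this
  · calc rightZigzag u α = (l ◁ u) ≫ (α_ l hh l).inv ≫ (α ▷ l) := by bicategory
    _ = (ρ_ l).hom ≫ (λ_ l).inv := rt



/-- Core of part 2: the factorization data of `(ρ_ r).inv` through the initial generic
`(λ_ r).inv` yields an adjunction `r ⊣ k`. -/
theorem adjB {Y Z : B} (r : Y ⟶ Z) (hh : Y ⟶ Z) (k : Z ⟶ Y)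
    (η : 𝟙 Y ⟶ hh ≫ k) (α : 𝟙 Y ≫ hh ⟶ r) (β : k ≫ r ⟶ 𝟙 Z)
    (hgen : IsGeneric (⟨hh, k, η⟩ : Fac (𝟙 Y) Z))
    (heq : (ρ_ r).inv = pasteFac (λ_ r).inv η α β) :
    Nonempty (r ⊣ k) := by
  set αh : hh ⟶ r := (λ_ hh).inv ≫ α with hαh
  set u : 𝟙 Y ⟶ r ≫ k := η ≫ (αh ▷ k) with hu
  -- left triangle
  have e1 : pasteFac (λ_ r).inv η α β
      = (λ_ r).inv ≫ (u ▷ r) ≫ (α_ r k r).hom ≫ (r ◁ β) := by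
    rw [pasteFac, hu, hαh]; bicategory
  have lt : (u ▷ r) ≫ (α_ r k r).hom ≫ (r ◁ β) = (λ_ r).hom ≫ (ρ_ r).inv := by
    rw [← cancel_epi (λ_ r).inv, Iso.inv_hom_id_assoc]
    exact (heq.trans e1).symm
  -- the right-triangle defect
  set s : k ⟶ k :=
    (ρ_ k).inv ≫ (k ◁ u) ≫ (α_ k r k).inv ≫ (β ▷ k) ≫ (λ_ k).hom with hs
  have key : u ≫ (r ◁ s) = u := by
    calc u ≫ (r ◁ s)
        = u ≫ (ρ_ (r ≫ k)).inv ≫ ((r ≫ k) ◁ u) ≫ (α_ r k (r ≫ k)).hom ≫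
            (r ◁ ((α_ k r k).inv ≫ (β ▷ k) ≫ (λ_ k).hom)) := by
          rw [hs]; bicategory
      _ = u ≫ (λ_ (r ≫ k)).inv ≫ (u ▷ (r ≫ k)) ≫ (α_ r k (r ≫ k)).hom ≫
            (r ◁ ((α_ k r k).inv ≫ (β ▷ k) ≫ (λ_ k).hom)) := by
          rw [reassoc_of% unit_swap u u]
      _ = u ≫ (((λ_ r).inv ≫ ((u ▷ r) ≫ (α_ r k r).hom ≫ (r ◁ β)) ≫ (ρ_ r).hom) ▷ k) := by
          bicategory
      _ = u := by rw [lt]; simp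
  -- genericity forces s = 𝟙
  have conn : Connected (⟨hh, k, η⟩ : Fac (𝟙 Y) Z) (⟨r, k, u⟩ : Fac (𝟙 Y) Z) :=
    Relation.EqvGen.rel _ _ ⟨αh, 𝟙 k, by simp [hu]⟩
  obtain ⟨p, _, hup⟩ := hgen ⟨r, k, u⟩ conn
  have h1 : ((αh, 𝟙 k) : (hh ⟶ r) × (k ⟶ k)) = p := hup _ (by simp [hu])
  have h2 : ((αh, s) : (hh ⟶ r) × (k ⟶ k)) = p := by
    refine hup _ ?_
    show u = η ≫ (αh ▷ k) ≫ (r ◁ s)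
    rw [← Category.assoc, ← hu, key]
  have hS : s = 𝟙 k := congrArg Prod.snd (h2.trans h1.symm)
  -- assemble the adjunction
  refine ⟨⟨u, β, ?_, ?_⟩⟩
  · calc leftZigzag u β = (u ▷ r) ≫ (α_ r k r).hom ≫ (r ◁ β) := by bicategory
    _ = (λ_ r).hom ≫ (ρ_ r).inv := lt
  · have : (k ◁ u) ≫ (α_ k r k).inv ≫ (β ▷ k) = (ρ_ k).hom ≫ (λ_ k).inv := by
      rw [← cancel_epi (ρ_ k).inv, ← cancel_mono (λ_ k).hom]
      simpa using hS
    calc rightZigzag u β = (k ◁ u) ≫ (α_ k r k).inv ≫ (β ▷ k) := by bicategory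
    _ = (ρ_ k).hom ≫ (λ_ k).inv := this

end GenericBicat

open GenericBicat

/-- In a generic bicategory satisfying Axioms 1 and 2: if an inverse right unitor
`l ⟶ l ≫ 𝟙 Y` is an initial generic then `l` is a right adjoint; dually, if an inverse
left unitor `r ⟶ 𝟙 Y ≫ r` is an initial generic then `r` is a left adjoint. -/
theorem initial_unitor_gives_adjoint {B : Type u} [Bicategory.{w, v} B]
    (hB : IsGenericBicategory B) (hA1 : Axiom1 B) (hA2 : Axiom2 B) :
    (∀ {X Y : B} (l : X ⟶ Y), IsInitialGeneric l (𝟙 Y) (ρ_ l).inv →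
      ∃ h : Y ⟶ X, Nonempty (h ⊣ l)) ∧
    (∀ {Y Z : B} (r : Y ⟶ Z), IsInitialGeneric (𝟙 Y) r (λ_ r).inv →
      ∃ g : Z ⟶ Y, Nonempty (r ⊣ g)) := by
  constructor
  · intro X Y l hδ
    obtain ⟨⟨hh, k, η, α, β, hgen, heq⟩, -⟩ := hδ.2.2 (𝟙 X) l (λ_ l).inv
    exact ⟨hh, adjA l hh k η α β hgen heq⟩
  · intro Y Z r hδ
    obtain ⟨⟨hh, k, η, α, β, hgen, heq⟩, -⟩ := hδ.2.2 r (𝟙 Z) (ρ_ r).inv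
    exact ⟨k, adjB r hh k η α β hgen heq⟩
end

section
/- Assume C is a generic bicategory satisfying Axioms 1 and 2. Then every generic 2-cell out of an identity, δ : id_Y ⟹ k ∘ h, is the unit of an adjunction h ⊣ k; conversely, every unit of an adjunction ν : id ⟹ g ∘ f is a generic 2-cell. -/
open CategoryTheory CategoryTheory.Bicategory

universe w v u

/-!
A generic 2-cell `η : 𝟙 a ⟶ f ≫ g` is the unit of an adjunction with *any* 2-cell
`ϵ : g ≫ f ⟶ 𝟙 b` as counit: the two zigzags `l` and `r` satisfy `η ≫ l ▷ g = η ≫ f ◁ r`,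
so by genericity both are identities.

Hence a generic `η : 𝟙 Y ⟶ h ≫ k` is a unit as soon as there is some 2-cell `k ≫ h ⟶ 𝟙`.
Applying Axiom 2 twice to the initial generic `λ⁻¹ : 𝟙 Y ⟶ 𝟙 Y ≫ 𝟙 Y` makes `𝟙 (k ≫ h)` an
initial generic. Factoring `λ⁻¹ : k ≫ h ⟶ 𝟙 ≫ (k ≫ h)` through it gives `θ : 𝟙 Y ⟶ p ≫ q` and
`A : k ≫ p ⟶ 𝟙`; the factorization identity puts `θ` in the component of `η`, so genericity
of `η` provides `σ : h ⟶ p`, and `k ◁ σ ≫ A` is a counit.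

Conversely, factor the unit of `f ⊣ g` through a generic `θ` by `(u, v)`. Then `θ` is a unit
with counit `(v ▷ p ≫ g ◁ u) ≫ ϵ`, so `(u, v)` is a map of adjunctions; the mates of `v` and
`u` invert `u` and `v`, and genericity transports along invertible maps.
-/

namespace GenericBicat

variable {B : Type u} [Bicategory.{w, v} B]

section Fac

variable {X Z : B} {c : X ⟶ Z} {Y : B}

theorem cell_eq_comp {E F G : Fac c Y} {u : E.fst ⟶ F.fst} {v : E.snd ⟶ F.snd}
    {x : F.fst ⟶ G.fst} {y : F.snd ⟶ G.snd}
    (huv : F.cell = E.cell ≫ u ▷ E.snd ≫ F.fst ◁ v)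
    (hxy : G.cell = F.cell ≫ x ▷ F.snd ≫ G.fst ◁ y) :
    G.cell = E.cell ≫ (u ≫ x) ▷ E.snd ≫ G.fst ◁ (v ≫ y) := by
  rw [hxy, huv]
  simp only [Category.assoc, comp_whiskerRight, whiskerLeft_comp]
  rw [whisker_exchange_assoc]

theorem IsGeneric.pair_eq {F G : Fac c Y} (hF : IsGeneric F) (hFG : Connected F G)
    {u u' : F.fst ⟶ G.fst} {v v' : F.snd ⟶ G.snd}
    (h : G.cell = F.cell ≫ u ▷ F.snd ≫ G.fst ◁ v)
    (h' : G.cell = F.cell ≫ u' ▷ F.snd ≫ G.fst ◁ v') : u = u' ∧ v = v' := by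
  obtain ⟨_, -, huniq⟩ := hF G hFG
  exact Prod.ext_iff.mp ((huniq (u, v) h).trans (huniq (u', v') h').symm)

theorem IsGeneric.exists_isIso {F G : Fac c Y} (hF : IsGeneric F) (hG : IsGeneric G)
    (hFG : Connected F G) :
    ∃ (u : F.fst ⟶ G.fst) (v : F.snd ⟶ G.snd),
      G.cell = F.cell ≫ u ▷ F.snd ≫ G.fst ◁ v ∧ IsIso u ∧ IsIso v := by
  obtain ⟨⟨u, v⟩, huv, -⟩ := hF G hFG
  obtain ⟨⟨x, y⟩, hxy, -⟩ := hG F hFG.symm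
  have hF_id : F.cell = F.cell ≫ 𝟙 F.fst ▷ F.snd ≫ F.fst ◁ 𝟙 F.snd := by simp
  have hG_id : G.cell = G.cell ≫ 𝟙 G.fst ▷ G.snd ≫ G.fst ◁ 𝟙 G.snd := by simp
  obtain ⟨hux, hvy⟩ := hF.pair_eq (.refl _) (cell_eq_comp huv hxy) hF_id
  obtain ⟨hxu, hyv⟩ := hG.pair_eq (.refl _) (cell_eq_comp hxy huv) hG_id
  exact ⟨u, v, huv, ⟨x, hux, hxu⟩, ⟨y, hvy, hyv⟩⟩

theorem IsGeneric.of_isIso {F G : Fac c Y} (hF : IsGeneric F)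
    (u : F.fst ⟶ G.fst) (v : F.snd ⟶ G.snd) [IsIso u] [IsIso v]
    (huv : G.cell = F.cell ≫ u ▷ F.snd ≫ G.fst ◁ v) : IsGeneric G := by
  have hGF : F.cell = G.cell ≫ inv u ▷ G.snd ≫ F.fst ◁ inv v := by
    rw [huv]
    simp [whisker_exchange_assoc]
  intro H hGH
  obtain ⟨⟨x, y⟩, hxy, huniq⟩ := hF H ((Relation.EqvGen.rel _ _ ⟨u, v, huv⟩).trans _ _ _ hGH)
  refine ⟨(inv u ≫ x, inv v ≫ y), cell_eq_comp hGF hxy, ?_⟩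
  rintro ⟨s, t⟩ hst
  obtain ⟨hs, ht⟩ := Prod.ext_iff.mp (huniq (u ≫ s, v ≫ t) (cell_eq_comp huv hst))
  simp only at hs ht
  simp [← hs, ← ht]

end Fac

section Zigzag

variable {a b : B} {f : a ⟶ b} {g : b ⟶ a}

theorem unit_comp_whiskerRight_leftZigzag (η : 𝟙 a ⟶ f ≫ g) (ϵ : g ≫ f ⟶ 𝟙 b) :
    η ≫ ((λ_ f).inv ≫ leftZigzag η ϵ ≫ (ρ_ f).hom) ▷ g =
      η ≫ f ◁ ((ρ_ g).inv ≫ rightZigzag η ϵ ≫ (λ_ g).hom) :=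
  calc _ = 𝟙 _ ⊗≫ (𝟙 a ◁ η ≫ η ▷ (f ≫ g)) ⊗≫ f ◁ ϵ ▷ g ⊗≫ 𝟙 _ := by bicategory
    _ = 𝟙 _ ⊗≫ (η ▷ 𝟙 a ≫ (f ≫ g) ◁ η) ⊗≫ f ◁ ϵ ▷ g ⊗≫ 𝟙 _ := by rw [whisker_exchange]
    _ = _ := by bicategory

theorem IsGeneric.zigzags_eq {η : 𝟙 a ⟶ f ≫ g} (hη : IsGeneric (⟨f, g, η⟩ : Fac (𝟙 a) b))
    (ϵ : g ≫ f ⟶ 𝟙 b) :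
    leftZigzag η ϵ = (λ_ f).hom ≫ (ρ_ f).inv ∧ rightZigzag η ϵ = (ρ_ g).hom ≫ (λ_ g).inv := by
  set l := (λ_ f).inv ≫ leftZigzag η ϵ ≫ (ρ_ f).hom
  set r := (ρ_ g).inv ≫ rightZigzag η ϵ ≫ (λ_ g).hom
  have hl : η ≫ l ▷ g = η ≫ l ▷ g ≫ f ◁ 𝟙 g := by simp
  have hr : η ≫ l ▷ g = η ≫ 𝟙 f ▷ g ≫ f ◁ r := by
    rw [id_whiskerRight, Category.id_comp]
    exact unit_comp_whiskerRight_leftZigzag η ϵ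
  obtain ⟨hl1, hr1⟩ := hη.pair_eq (G := ⟨f, g, η ≫ l ▷ g⟩) (.rel _ _ ⟨l, 𝟙 g, hl⟩) hl hr
  constructor
  · simpa [l] using congrArg (fun x => (λ_ f).hom ≫ x ≫ (ρ_ f).inv) hl1
  · simpa [r] using congrArg (fun x => (ρ_ g).hom ≫ x ≫ (λ_ g).inv) hr1.symm

def IsGeneric.adjunction {η : 𝟙 a ⟶ f ≫ g} (hη : IsGeneric (⟨f, g, η⟩ : Fac (𝟙 a) b))
    (ϵ : g ≫ f ⟶ 𝟙 b) : f ⊣ g where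
  unit := η
  counit := ϵ
  left_triangle := (hη.zigzags_eq ϵ).1
  right_triangle := (hη.zigzags_eq ϵ).2

end Zigzag

section AdjunctionMap

variable {a b : B} {p f : a ⟶ b} {q g : b ⟶ a} (adj₁ : p ⊣ q) (adj₂ : f ⊣ g)
  {u : p ⟶ f} {v : q ⟶ g}

theorem isIso_left_of_adjunction_map (hunit : adj₂.unit = adj₁.unit ≫ u ▷ q ≫ f ◁ v)
    (hcounit : adj₁.counit = (v ▷ p ≫ g ◁ u) ≫ adj₂.counit) : IsIso u := by
  set θ := adj₁.unit
  set ϵ := adj₂.counit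
  refine ⟨(λ_ f).inv ≫ θ ▷ f ≫ (α_ p q f).hom ≫ p ◁ (v ▷ f ≫ ϵ) ≫ (ρ_ p).hom, ?_, ?_⟩
  · calc _ = 𝟙 _ ⊗≫ (𝟙 a ◁ u ≫ θ ▷ f) ⊗≫ p ◁ (v ▷ f ≫ ϵ) ⊗≫ 𝟙 _ := by bicategory
      _ = 𝟙 _ ⊗≫ θ ▷ p ⊗≫ p ◁ (q ◁ u ≫ v ▷ f) ⊗≫ p ◁ ϵ ⊗≫ 𝟙 _ := by
        rw [whisker_exchange]; bicategory
      _ = (λ_ p).inv ≫ leftZigzag θ ((v ▷ p ≫ g ◁ u) ≫ ϵ) ≫ (ρ_ p).hom := by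
        rw [whisker_exchange]; bicategory
      _ = 𝟙 p := by rw [← hcounit, adj₁.left_triangle]; bicategory
  · calc _ = 𝟙 _ ⊗≫ θ ▷ f ⊗≫ (p ◁ (v ▷ f ≫ ϵ) ≫ u ▷ 𝟙 b) ⊗≫ 𝟙 _ := by bicategory
      _ = 𝟙 _ ⊗≫ θ ▷ f ⊗≫ (u ▷ (q ≫ f) ≫ f ◁ (v ▷ f ≫ ϵ)) ⊗≫ 𝟙 _ := by rw [whisker_exchange]
      _ = (λ_ f).inv ≫ leftZigzag (θ ≫ u ▷ q ≫ f ◁ v) ϵ ≫ (ρ_ f).hom := by bicategory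
      _ = 𝟙 f := by rw [← hunit, adj₂.left_triangle]; bicategory

theorem isIso_right_of_adjunction_map (hunit : adj₂.unit = adj₁.unit ≫ u ▷ q ≫ f ◁ v)
    (hcounit : adj₁.counit = (v ▷ p ≫ g ◁ u) ≫ adj₂.counit) : IsIso v := by
  set θ := adj₁.unit
  set ϵ := adj₂.counit
  refine ⟨(ρ_ g).inv ≫ g ◁ θ ≫ (α_ g p q).inv ≫ (g ◁ u ≫ ϵ) ▷ q ≫ (λ_ q).hom, ?_, ?_⟩
  · calc _ = 𝟙 _ ⊗≫ (v ▷ 𝟙 a ≫ g ◁ θ) ⊗≫ (g ◁ u ≫ ϵ) ▷ q ⊗≫ 𝟙 _ := by bicategory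
      _ = (ρ_ q).inv ≫ rightZigzag θ ((v ▷ p ≫ g ◁ u) ≫ ϵ) ≫ (λ_ q).hom := by
        rw [← whisker_exchange]; bicategory
      _ = 𝟙 q := by rw [← hcounit, adj₁.right_triangle]; bicategory
  · calc _ = 𝟙 _ ⊗≫ g ◁ θ ⊗≫ ((g ◁ u ≫ ϵ) ▷ q ≫ 𝟙 b ◁ v) ⊗≫ 𝟙 _ := by bicategory
      _ = 𝟙 _ ⊗≫ g ◁ θ ⊗≫ ((g ≫ p) ◁ v ≫ (g ◁ u) ▷ g) ⊗≫ ϵ ▷ g ⊗≫ 𝟙 _ := by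
        rw [← whisker_exchange]; bicategory
      _ = 𝟙 _ ⊗≫ g ◁ θ ⊗≫ ((g ◁ u) ▷ q ≫ (g ≫ f) ◁ v) ⊗≫ ϵ ▷ g ⊗≫ 𝟙 _ := by
        rw [whisker_exchange]
      _ = (ρ_ g).inv ≫ rightZigzag (θ ≫ u ▷ q ≫ f ◁ v) ϵ ≫ (λ_ g).hom := by bicategory
      _ = 𝟙 g := by rw [← hunit, adj₂.right_triangle]; bicategory

end AdjunctionMap

theorem isGeneric_unit (hB : IsGenericBicategory B) {a b : B} {f : a ⟶ b} {g : b ⟶ a}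
    (adj : f ⊣ g) : IsGeneric (⟨f, g, adj.unit⟩ : Fac (𝟙 a) b) := by
  obtain ⟨⟨p, q, θ⟩, hθ, u, v, hunit⟩ := hB (𝟙 a) b ⟨f, g, adj.unit⟩
  let adjθ := hθ.adjunction ((v ▷ p ≫ g ◁ u) ≫ adj.counit)
  have := isIso_left_of_adjunction_map adjθ adj hunit rfl
  have := isIso_right_of_adjunction_map adjθ adj hunit rfl
  exact hθ.of_isIso u v hunit

theorem pasteFac_leftUnitor_inv {Y Y' : B} {h : Y ⟶ Y'} {k : Y' ⟶ Y} (η : 𝟙 Y ⟶ h ≫ k)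
    {a : Y ⟶ Y'} {b : Y' ⟶ Y} (α : 𝟙 Y ≫ h ⟶ a) (β : k ≫ 𝟙 Y ⟶ b) :
    pasteFac (λ_ (𝟙 Y)).inv η α β = η ≫ ((λ_ h).inv ≫ α) ▷ k ≫ a ◁ ((ρ_ k).inv ≫ β) := by
  dsimp only [pasteFac]
  bicategory

theorem isInitialGeneric_id (hB : IsGenericBicategory B) (Y : B) :
    IsInitialGeneric (𝟙 Y) (𝟙 Y) (λ_ (𝟙 Y)).inv := by
  refine ⟨by rw [unitors_inv_equal]; exact isGeneric_unit hB (Adjunction.id Y),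
    inferInstance, fun a b γ => ⟨?_, ?_⟩⟩
  · obtain ⟨⟨h, k, η⟩, hη, u, v, hγ⟩ := hB (𝟙 Y) _ ⟨a, b, γ⟩
    refine ⟨h, k, η, (λ_ h).hom ≫ u, (ρ_ k).hom ≫ v, hη, ?_⟩
    rw [pasteFac_leftUnitor_inv]
    simpa using hγ
  · intro h k η α β hη hγ h' k' η' α' β' hη' hγ'
    rw [pasteFac_leftUnitor_inv] at hγ hγ'
    have hηγ : Connected (⟨h, k, η⟩ : Fac (𝟙 Y) _) ⟨a, b, γ⟩ := .rel _ _ ⟨_, _, hγ⟩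
    have hη'γ : Connected (⟨h', k', η'⟩ : Fac (𝟙 Y) _) ⟨a, b, γ⟩ := .rel _ _ ⟨_, _, hγ'⟩
    obtain ⟨φ, ψ, hη'η, _, _⟩ := hη.exists_isIso hη' (hηγ.trans _ _ _ hη'γ.symm)
    obtain ⟨hα, hβ⟩ := hη.pair_eq hηγ hγ (cell_eq_comp hη'η hγ')
    refine ⟨asIso φ, asIso ψ, hη'η, ?_, ?_⟩
    · simpa [id_whiskerLeft] using (λ_ h).hom ≫= hα
    · simpa [id_whiskerRight] using (ρ_ k).hom ≫= hβ

section GenericOutOfIdentity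

variable {Y Y' : B} {h : Y ⟶ Y'} {k : Y' ⟶ Y}

theorem isInitialGeneric_comp (hB : IsGenericBicategory B) (hA2 : Axiom2 B) {η : 𝟙 Y ⟶ h ≫ k}
    (hη : IsGeneric (⟨h, k, η⟩ : Fac (𝟙 Y) Y')) : IsInitialGeneric k h (𝟙 (k ≫ h)) :=
  have hk := (hA2 _ _ _ _ (isInitialGeneric_id hB Y) h k η hη).2
  (hA2 _ _ _ _ hk h k η hη).1

theorem connected_of_pasteFac_eq_leftUnitor_inv (η : 𝟙 Y ⟶ h ≫ k) {p : Y ⟶ Y'} {q : Y' ⟶ Y}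
    (θ : 𝟙 Y ⟶ p ≫ q) (A : k ≫ p ⟶ 𝟙 Y') (C : q ≫ h ⟶ k ≫ h)
    (hfac : pasteFac (𝟙 (k ≫ h)) θ A C = (λ_ (k ≫ h)).inv) :
    Connected (⟨h, k, η⟩ : Fac (𝟙 Y) Y') ⟨p, q, θ⟩ := by
  let G : Fac (𝟙 Y) Y' := ⟨h, (k ≫ h) ≫ k, η ≫ h ◁ ((ρ_ k).inv ≫ k ◁ η ≫ (α_ k h k).inv)⟩
  have hηG : FacHom ⟨h, k, η⟩ G := ⟨𝟙 h, (ρ_ k).inv ≫ k ◁ η ≫ (α_ k h k).inv, by simp [G]⟩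
  refine (Relation.EqvGen.rel _ _ hηG).trans _ _ _ (Relation.EqvGen.rel _ _ ?_).symm
  refine ⟨(λ_ p).inv ≫ η ▷ p ≫ (α_ h k p).hom ≫ h ◁ A ≫ (ρ_ h).hom,
    (ρ_ q).inv ≫ q ◁ η ≫ (α_ q h k).inv ≫ C ▷ k, Eq.symm ?_⟩
  calc _ = 𝟙 _ ⊗≫ (𝟙 Y ◁ θ ≫ η ▷ (p ≫ q)) ⊗≫ h ◁ A ▷ q ⊗≫ h ◁ q ◁ η ⊗≫ h ◁ C ▷ k ⊗≫ 𝟙 _ := by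
        bicategory
    _ = 𝟙 _ ⊗≫ η ⊗≫ h ◁ ((((ρ_ k).inv ≫ k ◁ θ ≫ (α_ k p q).inv ≫ A ▷ q ≫ (λ_ q).hom) ▷ 𝟙 Y
          ≫ q ◁ η) ⊗≫ C ▷ k) ⊗≫ 𝟙 _ := by
        rw [whisker_exchange]; bicategory
    _ = 𝟙 _ ⊗≫ η ⊗≫ h ◁ ((k ◁ η ≫
          ((ρ_ k).inv ≫ k ◁ θ ≫ (α_ k p q).inv ≫ A ▷ q ≫ (λ_ q).hom) ▷ (h ≫ k)) ⊗≫ C ▷ k)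
          ⊗≫ 𝟙 _ := by
        rw [← whisker_exchange]
    _ = η ≫ h ◁ ((ρ_ k).inv ≫ k ◁ η ≫ (α_ k h k).inv ≫
          (pasteFac (𝟙 (k ≫ h)) θ A C ≫ (λ_ (k ≫ h)).hom) ▷ k) := by
        dsimp only [pasteFac]; bicategory
    _ = _ := by simp [hfac, G]

theorem IsGeneric.exists_adjunction (hB : IsGenericBicategory B) (hA2 : Axiom2 B)
    {η : 𝟙 Y ⟶ h ≫ k} (hη : IsGeneric (⟨h, k, η⟩ : Fac (𝟙 Y) Y')) :
    ∃ adj : h ⊣ k, adj.unit = η := by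
  obtain ⟨p, q, θ, A, C, -, hfac⟩ :=
    ((isInitialGeneric_comp hB hA2 hη).2.2 (𝟙 Y') (k ≫ h) (λ_ (k ≫ h)).inv).1
  obtain ⟨⟨σ, -⟩, -, -⟩ :=
    hη ⟨p, q, θ⟩ (connected_of_pasteFac_eq_leftUnitor_inv η θ A C hfac.symm)
  exact ⟨hη.adjunction (k ◁ σ ≫ A), rfl⟩

end GenericOutOfIdentity

end GenericBicat

open GenericBicat

theorem generic_out_of_identity_iff_unit_general {B : Type u} [Bicategory.{w, v} B]
    (hB : IsGenericBicategory B) (hA2 : Axiom2 B) :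
    (∀ {Y Y' : B} (h : Y ⟶ Y') (k : Y' ⟶ Y) (η : 𝟙 Y ⟶ h ≫ k),
      IsGeneric (⟨h, k, η⟩ : Fac (𝟙 Y) Y') → ∃ adj : h ⊣ k, adj.unit = η) ∧
    (∀ {a b : B} (f : a ⟶ b) (g : b ⟶ a) (adj : f ⊣ g),
      IsGeneric (⟨f, g, adj.unit⟩ : Fac (𝟙 a) b)) :=
  ⟨fun _ _ _ hη => hη.exists_adjunction hB hA2, fun _ _ adj => isGeneric_unit hB adj⟩

/-- In a generic bicategory satisfying Axioms 1 and 2, every generic 2-cell out of an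
identity `η : 𝟙 Y ⟶ h ≫ k` is the unit of an adjunction `h ⊣ k`; conversely, every unit
of an adjunction is a generic 2-cell out of an identity. -/
theorem generic_out_of_identity_iff_unit {B : Type u} [Bicategory.{w, v} B]
    (hB : IsGenericBicategory B) (hA1 : Axiom1 B) (hA2 : Axiom2 B) :
    (∀ {Y Y' : B} (h : Y ⟶ Y') (k : Y' ⟶ Y) (η : 𝟙 Y ⟶ h ≫ k),
      IsGeneric (⟨h, k, η⟩ : Fac (𝟙 Y) Y') → ∃ adj : h ⊣ k, adj.unit = η) ∧
    (∀ {a b : B} (f : a ⟶ b) (g : b ⟶ a) (adj : f ⊣ g),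
      IsGeneric (⟨f, g, adj.unit⟩ : Fac (𝟙 a) b)) :=
  generic_out_of_identity_iff_unit_general hB hA2
end

section
/- Assume C is a generic bicategory satisfying Axioms 1 and 2. Then every 2-cell α : f₁ ⟹ f₂ between left adjoint 1-cells f₁, f₂ : X → Y is invertible. -/
open CategoryTheory CategoryTheory.Bicategory

universe w v u

open GenericBicat

section AuxLemmas

variable {B : Type u} [Bicategory.{w, v} B] {X Y : B}

/-- The standard mate identity: pasting the mate of `α` onto the unit of `adj₂`
recovers `α` pasted onto the unit of `adj₁`. -/
theorem genericbicat_mate_eq {f₁ f₂ : X ⟶ Y} {g₁ g₂ : Y ⟶ X}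
    (adj₁ : f₁ ⊣ g₁) (adj₂ : f₂ ⊣ g₂) (α : f₁ ⟶ f₂) :
    adj₂.unit ≫ f₂ ◁ (𝟙 g₂ ⊗≫ g₂ ◁ (adj₁.unit ≫ α ▷ g₁) ⊗≫ adj₂.counit ▷ g₁ ⊗≫ 𝟙 g₁) =
      adj₁.unit ≫ α ▷ g₁ := by
  calc adj₂.unit ≫ f₂ ◁ (𝟙 g₂ ⊗≫ g₂ ◁ (adj₁.unit ≫ α ▷ g₁) ⊗≫ adj₂.counit ▷ g₁ ⊗≫ 𝟙 g₁)
      = 𝟙 _ ⊗≫ (adj₂.unit ▷ 𝟙 X ≫ (f₂ ≫ g₂) ◁ (adj₁.unit ≫ α ▷ g₁)) ⊗≫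
          f₂ ◁ adj₂.counit ▷ g₁ ⊗≫ 𝟙 _ := by
        bicategory
    _ = 𝟙 _ ⊗≫ 𝟙 X ◁ (adj₁.unit ≫ α ▷ g₁) ⊗≫ adj₂.unit ▷ (f₂ ≫ g₁) ⊗≫
          f₂ ◁ adj₂.counit ▷ g₁ ⊗≫ 𝟙 _ := by
        rw [← whisker_exchange adj₂.unit (adj₁.unit ≫ α ▷ g₁)]; bicategory
    _ = 𝟙 _ ⊗≫ (adj₁.unit ≫ α ▷ g₁) ⊗≫ leftZigzag adj₂.unit adj₂.counit ▷ g₁ ⊗≫ 𝟙 _ := by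
        bicategory
    _ = adj₁.unit ≫ α ▷ g₁ := by
        rw [adj₂.left_triangle]; bicategory

/-- If the unit of an adjunction `f ⊣ g` factors through `η` via `p` and `q`, then the
induced 2-cell `f ⟶ h` built from `η` and the counit is a section of `p`. -/
theorem genericbicat_sec_eq {f : X ⟶ Y} {g : Y ⟶ X} (adj : f ⊣ g) {h : X ⟶ Y} {k : Y ⟶ X}
    (η : 𝟙 X ⟶ h ≫ k) (p : h ⟶ f) (q : k ⟶ g)
    (hu : adj.unit = η ≫ p ▷ k ≫ f ◁ q) :
    (𝟙 f ⊗≫ η ▷ f ⊗≫ h ◁ (q ▷ f ≫ adj.counit) ⊗≫ 𝟙 h) ≫ p = 𝟙 f := by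
  calc (𝟙 f ⊗≫ η ▷ f ⊗≫ h ◁ (q ▷ f ≫ adj.counit) ⊗≫ 𝟙 h) ≫ p
      = 𝟙 f ⊗≫ η ▷ f ⊗≫ (h ◁ (q ▷ f ≫ adj.counit) ≫ p ▷ 𝟙 Y) ⊗≫ 𝟙 f := by
        bicategory
    _ = 𝟙 f ⊗≫ η ▷ f ⊗≫ (p ▷ (k ≫ f) ≫ f ◁ (q ▷ f ≫ adj.counit)) ⊗≫ 𝟙 f := by
        rw [whisker_exchange p (q ▷ f ≫ adj.counit)]
    _ = 𝟙 f ⊗≫ (η ≫ p ▷ k ≫ f ◁ q) ▷ f ⊗≫ f ◁ adj.counit ⊗≫ 𝟙 f := by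
        bicategory
    _ = 𝟙 f ⊗≫ leftZigzag adj.unit adj.counit ⊗≫ 𝟙 f := by
        rw [← hu]; bicategory
    _ = 𝟙 f := by
        rw [adj.left_triangle]; bicategory

/-- Whiskering the "comparison endomorphism" of `h` into `η` can be rewritten as
whiskering an endomorphism of `k` into `η`. -/
theorem genericbicat_eta_pm {f₂ h : X ⟶ Y} {k : Y ⟶ X} (η : 𝟙 X ⟶ h ≫ k) (p' : h ⟶ f₂)
    (s : k ≫ f₂ ⟶ 𝟙 Y) :
    η ≫ (p' ≫ (𝟙 f₂ ⊗≫ η ▷ f₂ ⊗≫ h ◁ s ⊗≫ 𝟙 h)) ▷ k =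
      η ≫ h ◁ (𝟙 k ⊗≫ k ◁ η ⊗≫ (k ◁ p' ≫ s) ▷ k ⊗≫ 𝟙 k) := by
  calc η ≫ (p' ≫ (𝟙 f₂ ⊗≫ η ▷ f₂ ⊗≫ h ◁ s ⊗≫ 𝟙 h)) ▷ k
      = 𝟙 _ ⊗≫ η ⊗≫ (𝟙 X ◁ p' ≫ η ▷ f₂) ▷ k ⊗≫ (h ◁ s) ▷ k ⊗≫ 𝟙 _ := by
        bicategory
    _ = 𝟙 _ ⊗≫ η ⊗≫ (η ▷ h ≫ (h ≫ k) ◁ p') ▷ k ⊗≫ (h ◁ s) ▷ k ⊗≫ 𝟙 _ := by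
        rw [whisker_exchange η p']
    _ = 𝟙 _ ⊗≫ (𝟙 X ◁ η ≫ η ▷ (h ≫ k)) ⊗≫ ((h ≫ k) ◁ p') ▷ k ⊗≫ (h ◁ s) ▷ k ⊗≫ 𝟙 _ := by
        bicategory
    _ = 𝟙 _ ⊗≫ (η ▷ 𝟙 X ≫ (h ≫ k) ◁ η) ⊗≫ ((h ≫ k) ◁ p') ▷ k ⊗≫ (h ◁ s) ▷ k ⊗≫ 𝟙 _ := by
        rw [whisker_exchange η η]
    _ = η ≫ h ◁ (𝟙 k ⊗≫ k ◁ η ⊗≫ (k ◁ p' ≫ s) ▷ k ⊗≫ 𝟙 k) := by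
        bicategory

/-- The endomorphism of `k` induced by a factorization of the unit of `f₂ ⊣ g₂` through `η`
acts trivially on `q'`. -/
theorem genericbicat_Z_q {f₂ : X ⟶ Y} {g₂ : Y ⟶ X} (adj : f₂ ⊣ g₂) {h : X ⟶ Y} {k : Y ⟶ X}
    (η : 𝟙 X ⟶ h ≫ k) (p' : h ⟶ f₂) (q' : k ⟶ g₂)
    (hu : adj.unit = η ≫ p' ▷ k ≫ f₂ ◁ q') :
    (𝟙 k ⊗≫ k ◁ η ⊗≫ (k ◁ p' ≫ (q' ▷ f₂ ≫ adj.counit)) ▷ k ⊗≫ 𝟙 k) ≫ q' = q' := by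
  calc (𝟙 k ⊗≫ k ◁ η ⊗≫ (k ◁ p' ≫ (q' ▷ f₂ ≫ adj.counit)) ▷ k ⊗≫ 𝟙 k) ≫ q'
      = 𝟙 _ ⊗≫ k ◁ η ⊗≫ ((k ◁ p' ≫ q' ▷ f₂ ≫ adj.counit) ▷ k ≫ 𝟙 Y ◁ q') ⊗≫ 𝟙 _ := by
        bicategory
    _ = 𝟙 _ ⊗≫ k ◁ η ⊗≫ ((k ≫ h) ◁ q' ≫ (k ◁ p' ≫ q' ▷ f₂ ≫ adj.counit) ▷ g₂) ⊗≫ 𝟙 _ := by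
        rw [← whisker_exchange (k ◁ p' ≫ q' ▷ f₂ ≫ adj.counit) q']
    _ = 𝟙 _ ⊗≫ k ◁ (η ≫ h ◁ q' ≫ p' ▷ g₂) ⊗≫ (q' ▷ f₂ ≫ adj.counit) ▷ g₂ ⊗≫ 𝟙 _ := by
        bicategory
    _ = 𝟙 _ ⊗≫ k ◁ (η ≫ p' ▷ k ≫ f₂ ◁ q') ⊗≫ (q' ▷ f₂ ≫ adj.counit) ▷ g₂ ⊗≫ 𝟙 _ := by
        rw [whisker_exchange p' q']
    _ = 𝟙 _ ⊗≫ (k ◁ adj.unit ≫ q' ▷ (f₂ ≫ g₂)) ⊗≫ adj.counit ▷ g₂ ⊗≫ 𝟙 _ := by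
        rw [← hu]; bicategory
    _ = 𝟙 _ ⊗≫ (q' ▷ 𝟙 X ≫ g₂ ◁ adj.unit) ⊗≫ adj.counit ▷ g₂ ⊗≫ 𝟙 _ := by
        rw [whisker_exchange q' adj.unit]
    _ = q' ≫ (𝟙 g₂ ⊗≫ rightZigzag adj.unit adj.counit ⊗≫ 𝟙 g₂) := by
        bicategory
    _ = q' := by
        rw [adj.right_triangle]; bicategory

end AuxLemmas

/-- In a generic bicategory satisfying Axioms 1 and 2, every 2-cell between left adjoint
1-cells is invertible. -/
theorem leftAdjoint_cell_isIso {B : Type u} [Bicategory.{w, v} B]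
    (hB : IsGenericBicategory B) (hA1 : Axiom1 B) (hA2 : Axiom2 B)
    {X Y : B} (f₁ f₂ : X ⟶ Y)
    (h₁ : ∃ g₁ : Y ⟶ X, Nonempty (f₁ ⊣ g₁)) (h₂ : ∃ g₂ : Y ⟶ X, Nonempty (f₂ ⊣ g₂))
    (α : f₁ ⟶ f₂) : IsIso α := by
  obtain ⟨g₁, ⟨adj₁⟩⟩ := h₁
  obtain ⟨g₂, ⟨adj₂⟩⟩ := h₂
  -- generic factorization of the unit of `adj₁`
  obtain ⟨F, hFgen, hFhom⟩ := hB (𝟙 X) Y ⟨f₁, g₁, adj₁.unit⟩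
  obtain ⟨h, k, η⟩ := F
  obtain ⟨p, q, hu₁⟩ := hFhom
  have hu₁' : adj₁.unit = η ≫ p ▷ k ≫ f₁ ◁ q := hu₁
  -- the mate of `α`
  have hmate : adj₂.unit ≫
      f₂ ◁ (𝟙 g₂ ⊗≫ g₂ ◁ (adj₁.unit ≫ α ▷ g₁) ⊗≫ adj₂.counit ▷ g₁ ⊗≫ 𝟙 g₁) =
      adj₁.unit ≫ α ▷ g₁ := genericbicat_mate_eq adj₁ adj₂ α
  obtain ⟨β, hβ⟩ : ∃ β : g₂ ⟶ g₁, adj₂.unit ≫ f₂ ◁ β = adj₁.unit ≫ α ▷ g₁ := ⟨_, hmate⟩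
  -- connectivity in the category of elements
  have connMid : Connected (⟨h, k, η⟩ : Fac (𝟙 X) Y) ⟨f₂, g₁, adj₁.unit ≫ α ▷ g₁⟩ :=
    .trans _ _ _ (.rel _ _ ⟨p, q, hu₁⟩)
      (.rel _ _ ⟨α, 𝟙 g₁, by simp⟩)
  have connG2 : Connected (⟨h, k, η⟩ : Fac (𝟙 X) Y) ⟨f₂, g₂, adj₂.unit⟩ :=
    .trans _ _ _ connMid (.symm _ _ (.rel _ _ ⟨𝟙 f₂, β, by rw [← hβ]; simp⟩))
  -- factor the unit of `adj₂` through the generic `η`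
  obtain ⟨⟨p', q'⟩, hfac', huniq'⟩ := hFgen ⟨f₂, g₂, adj₂.unit⟩ connG2
  have hu₂ : adj₂.unit = η ≫ p' ▷ k ≫ f₂ ◁ q' := hfac'
  -- uniqueness at the middle object gives `p ≫ α = p'`
  obtain ⟨pqm, hfacm, huniqm⟩ := hFgen ⟨f₂, g₁, adj₁.unit ≫ α ▷ g₁⟩ connMid
  have fac1 : (⟨f₂, g₁, adj₁.unit ≫ α ▷ g₁⟩ : Fac (𝟙 X) Y).cell =
      η ≫ (p ≫ α) ▷ k ≫ f₂ ◁ q := by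
    show adj₁.unit ≫ α ▷ g₁ = _
    calc adj₁.unit ≫ α ▷ g₁ = η ≫ p ▷ k ≫ (f₁ ◁ q ≫ α ▷ g₁) := by
          rw [hu₁']; simp only [Category.assoc]
      _ = η ≫ p ▷ k ≫ α ▷ k ≫ f₂ ◁ q := by rw [whisker_exchange α q]
      _ = η ≫ (p ≫ α) ▷ k ≫ f₂ ◁ q := by simp
  have fac2 : (⟨f₂, g₁, adj₁.unit ≫ α ▷ g₁⟩ : Fac (𝟙 X) Y).cell =
      η ≫ p' ▷ k ≫ f₂ ◁ (q' ≫ β) := by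
    show adj₁.unit ≫ α ▷ g₁ = _
    rw [← hβ, hu₂]; simp
  have hpair := (huniqm (p ≫ α, q) fac1).trans (huniqm (p', q' ≫ β) fac2).symm
  have hp' : p ≫ α = p' := congrArg Prod.fst hpair
  -- sections of `p` and `p'`
  obtain ⟨m₁, hm₁⟩ : ∃ m : f₁ ⟶ h, m ≫ p = 𝟙 f₁ :=
    ⟨_, genericbicat_sec_eq adj₁ η p q hu₁'⟩
  obtain ⟨m₂, hm₂def, hm₂⟩ : ∃ m : f₂ ⟶ h,
      m = 𝟙 f₂ ⊗≫ η ▷ f₂ ⊗≫ h ◁ (q' ▷ f₂ ≫ adj₂.counit) ⊗≫ 𝟙 h ∧ m ≫ p' = 𝟙 f₂ :=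
    ⟨_, rfl, genericbicat_sec_eq adj₂ η p' q' hu₂⟩
  -- `p' ≫ m₂ = 𝟙 h` via genericity
  have hZq := genericbicat_Z_q adj₂ η p' q' hu₂
  have hL3a : η ≫ (p' ≫ m₂) ▷ k =
      η ≫ h ◁ (𝟙 k ⊗≫ k ◁ η ⊗≫ (k ◁ p' ≫ (q' ▷ f₂ ≫ adj₂.counit)) ▷ k ⊗≫ 𝟙 k) := by
    rw [hm₂def]; exact genericbicat_eta_pm η p' (q' ▷ f₂ ≫ adj₂.counit)
  have connN : Connected (⟨h, k, η⟩ : Fac (𝟙 X) Y) ⟨h, g₂, η ≫ h ◁ q'⟩ :=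
    .rel _ _ ⟨𝟙 h, q', by simp⟩
  obtain ⟨pqN, hfacN, huniqN⟩ := hFgen ⟨h, g₂, η ≫ h ◁ q'⟩ connN
  have facN1 : (⟨h, g₂, η ≫ h ◁ q'⟩ : Fac (𝟙 X) Y).cell = η ≫ 𝟙 h ▷ k ≫ h ◁ q' := by
    show η ≫ h ◁ q' = _
    simp
  have facN2 : (⟨h, g₂, η ≫ h ◁ q'⟩ : Fac (𝟙 X) Y).cell = η ≫ (p' ≫ m₂) ▷ k ≫ h ◁ q' := by
    show η ≫ h ◁ q' = _
    conv_rhs => rw [← Category.assoc, hL3a, Category.assoc, ← Bicategory.whiskerLeft_comp, hZq]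
  have hNpair := (huniqN (𝟙 h, q') facN1).trans (huniqN (p' ≫ m₂, q') facN2).symm
  have hpm : p' ≫ m₂ = 𝟙 h := (congrArg Prod.fst hNpair).symm
  -- assemble the inverse of `α`
  refine ⟨⟨m₂ ≫ p, ?_, ?_⟩⟩
  · calc α ≫ m₂ ≫ p = (m₁ ≫ p) ≫ α ≫ m₂ ≫ p := by rw [hm₁, Category.id_comp]
      _ = m₁ ≫ ((p ≫ α) ≫ m₂) ≫ p := by simp only [Category.assoc]
      _ = m₁ ≫ (p' ≫ m₂) ≫ p := by rw [hp']
      _ = m₁ ≫ p := by rw [hpm, Category.id_comp]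
      _ = 𝟙 f₁ := hm₁
  · calc (m₂ ≫ p) ≫ α = m₂ ≫ p ≫ α := by rw [Category.assoc]
      _ = m₂ ≫ p' := by rw [hp']
      _ = 𝟙 f₂ := hm₂
end

section
/- Assume C is a generic bicategory satisfying Axioms 1 and 2, and suppose c : X → Z has initial generic δ : c ⟹ r ∘ l through Y. Then for any generic 2-cell η : id_Y ⟹ k ∘ h out of the identity on Y, the pasting of δ with η, a 2-cell c ⟹ (r ∘ k) ∘ (h ∘ l), is a (2-ary) generic 2-cell. -/
open CategoryTheory CategoryTheory.Bicategory

universe w v u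

open GenericBicat

section Aux
variable {B : Type u} [Bicategory.{w, v} B]

lemma pasteFac_comp' {X Y Y' Z : B} {l : X ⟶ Y} {r : Y ⟶ Z} {c : X ⟶ Z} (δ : c ⟶ l ≫ r)
    {h : Y ⟶ Y'} {k : Y' ⟶ Y} (η : 𝟙 Y ⟶ h ≫ k) {a a' : X ⟶ Y'} {b b' : Y' ⟶ Z}
    (α₁ : l ≫ h ⟶ a) (α₂ : a ⟶ a') (β₁ : k ≫ r ⟶ b) (β₂ : b ⟶ b') :
    pasteFac δ η (α₁ ≫ α₂) (β₁ ≫ β₂) =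
      pasteFac δ η α₁ β₁ ≫ (α₂ ▷ b) ≫ (a' ◁ β₂) := by
  simp [pasteFac]
  rw [associator_naturality_left_assoc, ← whisker_exchange_assoc]

lemma pasteFac_pre' {X Y Y' Z : B} {l : X ⟶ Y} {r : Y ⟶ Z} {c : X ⟶ Z} (δ : c ⟶ l ≫ r)
    {h h' : Y ⟶ Y'} {k k' : Y' ⟶ Y} (η : 𝟙 Y ⟶ h ≫ k) (φ : h ⟶ h') (ψ : k ⟶ k')
    {a : X ⟶ Y'} {b : Y' ⟶ Z} (α : l ≫ h' ⟶ a) (β : k' ≫ r ⟶ b) :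
    pasteFac δ (η ≫ (φ ▷ k) ≫ (h' ◁ ψ)) α β =
      pasteFac δ η ((l ◁ φ) ≫ α) ((ψ ▷ r) ≫ β) := by
  simp only [pasteFac, comp_whiskerRight, Category.assoc]
  rw [associator_naturality_middle, associator_naturality_left_assoc]
  simp only [Bicategory.whiskerLeft_comp, Category.assoc]
  rw [associator_inv_naturality_right_assoc, whisker_exchange_assoc,
    associator_inv_naturality_middle_assoc]

end Aux



/-- In a generic bicategory satisfying Axioms 1 and 2, the pasting of an initial generic
`δ : c ⟶ l ≫ r` through `Y` with a generic `η : 𝟙 Y ⟶ h ≫ k` out of the identity is a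
(2-ary) generic 2-cell `c ⟶ (l ≫ h) ≫ (k ≫ r)`. -/
theorem initial_paste_generic_isGeneric {B : Type u} [Bicategory.{w, v} B]
    (hB : IsGenericBicategory B) (hA1 : Axiom1 B) (hA2 : Axiom2 B)
    {X Y Y' Z : B} {c : X ⟶ Z} (l : X ⟶ Y) (r : Y ⟶ Z) (δ : c ⟶ l ≫ r)
    (hδ : IsInitialGeneric l r δ)
    (h : Y ⟶ Y') (k : Y' ⟶ Y) (η : 𝟙 Y ⟶ h ≫ k)
    (hη : IsGeneric (⟨h, k, η⟩ : Fac (𝟙 Y) Y')) :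
    IsGeneric (⟨l ≫ h, k ≫ r, pasteFac δ η (𝟙 (l ≫ h)) (𝟙 (k ≫ r))⟩ : Fac c Y') := by
  classical
  obtain ⟨hgenδ, hisoδ, hfact⟩ := hδ
  -- uniqueness of comparison pairs out of `δ` along the fixed generic `η`
  have uniq_pair : ∀ {a : X ⟶ Y'} {b : Y' ⟶ Z} (γ : c ⟶ a ≫ b)
      (u u' : l ≫ h ⟶ a) (v v' : k ≫ r ⟶ b),
      γ = pasteFac δ η u v → γ = pasteFac δ η u' v' → u = u' ∧ v = v' := by
    intro a b γ u u' v v' e1 e2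
    obtain ⟨φ₂, ψ₂, hφψ, hu, hv⟩ :=
      (hfact a b γ).2 h k η u v hη e1 h k η u' v' hη e2
    obtain ⟨p, hp, hpuniq⟩ := hη ⟨h, k, η⟩ (Relation.EqvGen.refl _)
    have h1 : ((φ₂.hom, ψ₂.hom) : (h ⟶ h) × (k ⟶ k)) = p := hpuniq _ hφψ
    have h2 : ((𝟙 h, 𝟙 k) : (h ⟶ h) × (k ⟶ k)) = p := by
      apply hpuniq; simp
    have hφ : φ₂.hom = 𝟙 h := by
      have := h1.trans h2.symm; exact (Prod.ext_iff.mp this).1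
    have hψ : ψ₂.hom = 𝟙 k := by
      have := h1.trans h2.symm; exact (Prod.ext_iff.mp this).2
    rw [hφ] at hu; rw [hψ] at hv
    simp only [Bicategory.whiskerLeft_id, Bicategory.id_whiskerRight,
      Category.id_comp] at hu hv
    exact ⟨hu, hv⟩
  intro G hconn
  -- the invariant along the connected component
  let Q : Fac c Y' → Prop := fun G =>
    ∃ (h' : Y ⟶ Y') (k' : Y' ⟶ Y) (η' : 𝟙 Y ⟶ h' ≫ k')
      (α' : l ≫ h' ⟶ G.fst) (β' : k' ≫ r ⟶ G.snd),
      IsGeneric (⟨h', k', η'⟩ : Fac (𝟙 Y) Y') ∧ G.cell = pasteFac δ η' α' β' ∧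
        Connected (⟨h, k, η⟩ : Fac (𝟙 Y) Y') ⟨h', k', η'⟩
  have step : ∀ F G : Fac c Y', FacHom F G → (Q F ↔ Q G) := by
    intro F G ⟨u, v, huv⟩
    constructor
    · rintro ⟨h', k', η', α', β', hg, heq, hc⟩
      refine ⟨h', k', η', α' ≫ u, β' ≫ v, hg, ?_, hc⟩
      rw [pasteFac_comp', ← heq, huv]
    · rintro ⟨h₂, k₂, η₂, α₂, β₂, hg₂, heq₂, hc₂⟩
      obtain ⟨h₁, k₁, η₁, α₁, β₁, hg₁, heq₁⟩ := (hfact F.fst F.snd F.cell).1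
      have heqG : G.cell = pasteFac δ η₁ (α₁ ≫ u) (β₁ ≫ v) := by
        rw [pasteFac_comp', ← heq₁, huv]
      obtain ⟨φ₂, ψ₂, hφψ, -, -⟩ :=
        (hfact G.fst G.snd G.cell).2 h₁ k₁ η₁ (α₁ ≫ u) (β₁ ≫ v) hg₁ heqG
          h₂ k₂ η₂ α₂ β₂ hg₂ heq₂
      have hcon12 : Connected (⟨h₁, k₁, η₁⟩ : Fac (𝟙 Y) Y') ⟨h₂, k₂, η₂⟩ :=
        Relation.EqvGen.rel _ _ ⟨φ₂.hom, ψ₂.hom, hφψ⟩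
      exact ⟨h₁, k₁, η₁, α₁, β₁, hg₁, heq₁,
        Relation.EqvGen.trans _ _ _ hc₂ (Relation.EqvGen.symm _ _ hcon12)⟩
  have hQ0 : Q ⟨l ≫ h, k ≫ r, pasteFac δ η (𝟙 (l ≫ h)) (𝟙 (k ≫ r))⟩ :=
    ⟨h, k, η, 𝟙 _, 𝟙 _, hη, rfl, Relation.EqvGen.refl _⟩
  have hiff : ∀ F G : Fac c Y', Connected F G → (Q F ↔ Q G) := by
    intro F G hc
    induction hc with
    | rel _ _ hfg => exact step _ _ hfg
    | refl => exact Iff.rfl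
    | symm _ _ _ ih => exact ih.symm
    | trans _ _ _ _ _ ih1 ih2 => exact ih1.trans ih2
  obtain ⟨h', k', η', α', β', hg', heq', hc'⟩ := (hiff _ _ hconn).1 hQ0
  obtain ⟨⟨φ, ψ⟩, hp, -⟩ := hη ⟨h', k', η'⟩ hc'
  -- existence
  have hGcell : G.cell = pasteFac δ η ((l ◁ φ) ≫ α') ((ψ ▷ r) ≫ β') := by
    dsimp only at hp φ ψ
    rw [heq', hp, pasteFac_pre']
  refine ⟨((l ◁ φ) ≫ α', (ψ ▷ r) ≫ β'), ?_, ?_⟩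
  · show G.cell = pasteFac δ η (𝟙 (l ≫ h)) (𝟙 (k ≫ r)) ≫ _ ≫ _
    rw [← pasteFac_comp', Category.id_comp, Category.id_comp, hGcell]
  · rintro ⟨u, v⟩ hq
    have hGu : G.cell = pasteFac δ η u v := by
      rw [hq, ← pasteFac_comp', Category.id_comp, Category.id_comp]
    obtain ⟨h1, h2⟩ := uniq_pair G.cell u ((l ◁ φ) ≫ α') v ((ψ ▷ r) ≫ β') hGu hGcell
    exact Prod.ext h1 h2
end
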